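/- arXiv:2111.10830 — 12 statements merged into one kernel-verified Lean document; each statement's English description precedes it below -/
import Mathlib

section
/- A Turing machine M = (Q, Γ, δ) is reversible if and only if δ has both the separability property and the injectivity property. -/
/-- The set of head directions: `-1` and `+1`. -/
abbrev Dir : Type := ({-1, 1} : Finset ℤ)

variable {Q Γ : Type*}

/-- The successor (partial) function on configurations `(p, i, X)` of the
infinite-tape Turing machine with transition function `δ`. -/
def succInf (δ : Q × Γ → Option (Q × Γ × Dir)) (c : Q × ℤ × (ℤ → Γ)) :
    Option (Q × ℤ × (ℤ → Γ)) :=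
  (δ (c.1, c.2.2 c.2.1)).map fun t =>
    (t.1, c.2.1 + (t.2.2 : ℤ), Function.update c.2.2 c.2.1 t.2.1)

/-- A genuine configuration: the tape is blank at all but finitely many cells. -/
def IsConf (blank : Γ) (c : Q × ℤ × (ℤ → Γ)) : Prop :=
  {j : ℤ | c.2.2 j ≠ blank}.Finite

/-- The machine is reversible: every configuration has at most one predecessor. -/
def ReversibleInf (δ : Q × Γ → Option (Q × Γ × Dir)) (blank : Γ) : Prop :=
  ∀ c₁ c₂ c', IsConf blank c₁ → IsConf blank c₂ →
    succInf δ c₁ = some c' → succInf δ c₂ = some c' → c₁ = c₂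

/-- `Q₋₁`: states entered by a left-moving transition. -/
def Qneg (δ : Q × Γ → Option (Q × Γ × Dir)) : Set Q :=
  {q | ∃ p a b d, δ (p, a) = some (q, b, d) ∧ (d : ℤ) = -1}

/-- `Q₊₁`: states entered by a right-moving transition. -/
def Qpos (δ : Q × Γ → Option (Q × Γ × Dir)) : Set Q :=
  {q | ∃ p a b d, δ (p, a) = some (q, b, d) ∧ (d : ℤ) = 1}

/-- The separability property: `Q₋₁ ∩ Q₊₁ = ∅`. -/
def Separability (δ : Q × Γ → Option (Q × Γ × Dir)) : Prop := Qneg δ ∩ Qpos δ = ∅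

/-- The injectivity property. -/
def Injectivity (δ : Q × Γ → Option (Q × Γ × Dir)) : Prop :=
  ∀ p₁ a₁ p₂ a₂ q b d₁ d₂, δ (p₁, a₁) = some (q, b, d₁) → δ (p₂, a₂) = some (q, b, d₂) →
    (p₁, a₁) = (p₂, a₂)

lemma dir_cases (d : Dir) : (d : ℤ) = -1 ∨ (d : ℤ) = 1 := by
  have := d.2
  rw [Finset.mem_insert, Finset.mem_singleton] at this
  exact this

lemma finite_update {Γ : Type*} (blank : Γ) (X : ℤ → Γ)
    (h : {j | X j ≠ blank}.Finite) (i : ℤ) (b : Γ) :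
    {j | Function.update X i b j ≠ blank}.Finite := by
  apply (h.insert i).subset
  intro j hj
  by_cases hji : j = i
  · simp [hji]
  · simp only [Set.mem_setOf_eq, Function.update_of_ne hji] at hj
    exact Set.mem_insert_of_mem _ hj

lemma finite_blank {Γ : Type*} (blank : Γ) :
    {j : ℤ | (fun _ : ℤ => blank) j ≠ blank}.Finite := by
  simp

/-- A Turing machine `M = (Q, Γ, δ)` is reversible if and only if `δ` has both the
separability property and the injectivity property. -/
theorem stmt_0 {Q Γ : Type*} [Fintype Q] [Fintype Γ] [Nonempty Q] (blank : Γ)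
    (δ : Q × Γ → Option (Q × Γ × Dir)) :
    ReversibleInf δ blank ↔ Separability δ ∧ Injectivity δ := by
  constructor
  · intro hrev
    have hsep : Separability δ := by
      rw [Separability, Set.eq_empty_iff_forall_notMem]
      rintro q ⟨⟨p₁, a₁, b₁, d₁, h₁, hd₁⟩, ⟨p₂, a₂, b₂, d₂, h₂, hd₂⟩⟩
      set Y : ℤ → Γ :=
        Function.update (Function.update (fun _ => blank) 1 b₁) (-1) b₂ with hYdef
      have hY1 : Y 1 = b₁ := by
        rw [hYdef, Function.update_of_ne (by norm_num), Function.update_self]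
      have hYm1 : Y (-1) = b₂ := by rw [hYdef, Function.update_self]
      set X₁ := Function.update Y 1 a₁ with hX₁
      set X₂ := Function.update Y (-1) a₂ with hX₂
      have hc : (p₁, (1 : ℤ), X₁) = (p₂, (-1 : ℤ), X₂) := by
        apply hrev _ _ (q, 0, Y)
        · exact finite_update blank _
            (finite_update blank _ (finite_update blank _ (finite_blank blank) _ _) _ _) _ _
        · exact finite_update blank _
            (finite_update blank _ (finite_update blank _ (finite_blank blank) _ _) _ _) _ _
        · show (δ (p₁, X₁ 1)).map _ = _
          rw [hX₁, Function.update_self, h₁]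
          simp only [Option.map_some, Option.some.injEq]
          have e1 : (1 : ℤ) + (d₁ : ℤ) = 0 := by rw [hd₁]; ring
          have e2 : Function.update X₁ 1 b₁ = Y := by
            rw [hX₁, Function.update_idem, ← hY1, Function.update_eq_self]
          rw [e1, e2]
        · show (δ (p₂, X₂ (-1))).map _ = _
          rw [hX₂, Function.update_self, h₂]
          simp only [Option.map_some, Option.some.injEq]
          have e1 : (-1 : ℤ) + (d₂ : ℤ) = 0 := by rw [hd₂]; ring
          have e2 : Function.update X₂ (-1) b₂ = Y := by
            rw [hX₂, Function.update_idem, ← hYm1, Function.update_eq_self]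
          rw [e1, e2]
      have : (1 : ℤ) = -1 := congrArg (fun c => c.2.1) hc
      norm_num at this
    refine ⟨hsep, ?_⟩
    intro p₁ a₁ p₂ a₂ q b d₁ d₂ h₁ h₂
    have hd : d₁ = d₂ := by
      rcases dir_cases d₁ with hd₁ | hd₁ <;> rcases dir_cases d₂ with hd₂ | hd₂
      · exact Subtype.ext (hd₁.trans hd₂.symm)
      · exfalso
        have : q ∈ Qneg δ ∩ Qpos δ := ⟨⟨p₁, a₁, b, d₁, h₁, hd₁⟩, ⟨p₂, a₂, b, d₂, h₂, hd₂⟩⟩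
        rw [hsep] at this
        exact this
      · exfalso
        have : q ∈ Qneg δ ∩ Qpos δ := ⟨⟨p₂, a₂, b, d₂, h₂, hd₂⟩, ⟨p₁, a₁, b, d₁, h₁, hd₁⟩⟩
        rw [hsep] at this
        exact this
      · exact Subtype.ext (hd₁.trans hd₂.symm)
    subst hd
    set X₁ := Function.update (fun _ : ℤ => blank) 0 a₁ with hX₁
    set X₂ := Function.update (fun _ : ℤ => blank) 0 a₂ with hX₂
    have hc : (p₁, (0 : ℤ), X₁) = (p₂, (0 : ℤ), X₂) := by
      apply hrev _ _ (q, 0 + (d₁ : ℤ), Function.update (fun _ : ℤ => blank) 0 b)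
      · exact finite_update blank _ (finite_blank blank) _ _
      · exact finite_update blank _ (finite_blank blank) _ _
      · show (δ (p₁, X₁ 0)).map _ = _
        rw [hX₁, Function.update_self, h₁]
        simp [Function.update_idem]
      · show (δ (p₂, X₂ 0)).map _ = _
        rw [hX₂, Function.update_self, h₂]
        simp [Function.update_idem]
    have hp : p₁ = p₂ := congrArg (fun c => c.1) hc
    have hX : X₁ = X₂ := congrArg (fun c => c.2.2) hc
    have ha : a₁ = a₂ := by
      have := congrFun hX 0
      rwa [hX₁, hX₂, Function.update_self, Function.update_self] at this
    rw [hp, ha]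
  · rintro ⟨hsep, hinj⟩
    rintro ⟨p₁, i₁, X₁⟩ ⟨p₂, i₂, X₂⟩ c' _ _ h₁ h₂
    simp only [succInf] at h₁ h₂
    rcases hδ₁ : δ (p₁, X₁ i₁) with _ | ⟨q₁, b₁, d₁⟩
    · rw [hδ₁] at h₁; simp at h₁
    rcases hδ₂ : δ (p₂, X₂ i₂) with _ | ⟨q₂, b₂, d₂⟩
    · rw [hδ₂] at h₂; simp at h₂
    rw [hδ₁] at h₁; rw [hδ₂] at h₂
    simp only [Option.map_some] at h₁ h₂
    have heq := Option.some.inj (h₁.trans h₂.symm)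
    obtain ⟨hq, hi, hX⟩ : q₁ = q₂ ∧ i₁ + (d₁ : ℤ) = i₂ + (d₂ : ℤ) ∧
        Function.update X₁ i₁ b₁ = Function.update X₂ i₂ b₂ := by
      exact ⟨congrArg (fun c => c.1) heq, congrArg (fun c => c.2.1) heq,
        congrArg (fun c => c.2.2) heq⟩
    subst hq
    have hd : d₁ = d₂ := by
      rcases dir_cases d₁ with hd₁ | hd₁ <;> rcases dir_cases d₂ with hd₂ | hd₂
      · exact Subtype.ext (hd₁.trans hd₂.symm)
      · exfalso
        have : q₁ ∈ Qneg δ ∩ Qpos δ :=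
          ⟨⟨p₁, X₁ i₁, b₁, d₁, hδ₁, hd₁⟩, ⟨p₂, X₂ i₂, b₂, d₂, hδ₂, hd₂⟩⟩
        rw [hsep] at this; exact this
      · exfalso
        have : q₁ ∈ Qneg δ ∩ Qpos δ :=
          ⟨⟨p₂, X₂ i₂, b₂, d₂, hδ₂, hd₂⟩, ⟨p₁, X₁ i₁, b₁, d₁, hδ₁, hd₁⟩⟩
        rw [hsep] at this; exact this
      · exact Subtype.ext (hd₁.trans hd₂.symm)
    subst hd
    have hii : i₁ = i₂ := by omega
    subst hii
    have hb : b₁ = b₂ := by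
      have := congrFun hX i₁
      rwa [Function.update_self, Function.update_self] at this
    subst hb
    have hpa : (p₁, X₁ i₁) = (p₂, X₂ i₁) := hinj p₁ (X₁ i₁) p₂ (X₂ i₁) q₁ b₁ d₁ d₁ hδ₁ hδ₂
    have hp : p₁ = p₂ := congrArg Prod.fst hpa
    have haa : X₁ i₁ = X₂ i₁ := congrArg Prod.snd hpa
    have hXX : X₁ = X₂ := by
      funext j
      by_cases hj : j = i₁
      · rw [hj]; exact haa
      · have := congrFun hX j
        rwa [Function.update_of_ne hj, Function.update_of_ne hj] at this
    rw [hp, hXX]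
end

section
/- If the separability property fails for δ, then the Turing machine M = (Q, Γ, δ) is not reversible: there exist two distinct configurations of M which have the same successor. Concretely, if δ(p₁, a₁) = some (q, b₁, +1) and δ(p₂, a₂) = some (q, b₂, -1), and X : ℤ → Γ is the everywhere-blank tape, then the distinct configurations (p₁, -1, X[-1 ↦ a₁][1 ↦ b₂]) and (p₂, 1, X[-1 ↦ b₁][1 ↦ a₂]) have the same successor (q, 0, X[-1 ↦ b₁][1 ↦ b₂]). -/
/-- The direction `+1`. -/
def dPlus : Dir := ⟨1, by decide⟩

/-- The direction `-1`. -/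
def dMinus : Dir := ⟨-1, by decide⟩

variable {Q Γ : Type*}

/-- If the separability property fails for `δ`, then the Turing machine is not reversible:
concretely, if `δ(p₁,a₁) = some (q,b₁,+1)` and `δ(p₂,a₂) = some (q,b₂,-1)` and `X` is the
everywhere-blank tape, then the distinct configurations `(p₁, -1, X[-1↦a₁][1↦b₂])` and
`(p₂, 1, X[-1↦b₁][1↦a₂])` have the same successor `(q, 0, X[-1↦b₁][1↦b₂])`. -/
theorem stmt_1 {Q Γ : Type*} [Fintype Q] [Fintype Γ] [Nonempty Q] (blank : Γ)
    (δ : Q × Γ → Option (Q × Γ × Dir)) (p₁ p₂ q : Q) (a₁ a₂ b₁ b₂ : Γ)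
    (h₁ : δ (p₁, a₁) = some (q, b₁, dPlus))
    (h₂ : δ (p₂, a₂) = some (q, b₂, dMinus)) :
    let X : ℤ → Γ := fun _ => blank
    let c₁ : Q × ℤ × (ℤ → Γ) :=
      (p₁, -1, Function.update (Function.update X (-1) a₁) 1 b₂)
    let c₂ : Q × ℤ × (ℤ → Γ) :=
      (p₂, 1, Function.update (Function.update X (-1) b₁) 1 a₂)
    c₁ ≠ c₂ ∧
      succInf δ c₁ = some (q, 0, Function.update (Function.update X (-1) b₁) 1 b₂) ∧
      succInf δ c₂ = some (q, 0, Function.update (Function.update X (-1) b₁) 1 b₂) := by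
  intro X c₁ c₂
  refine ⟨fun h => by simpa [c₁, c₂] using congrArg (fun c => c.2.1) h, ?_, ?_⟩
  · show (δ (p₁, Function.update (Function.update X (-1) a₁) 1 b₂ (-1))).map _ = _
    rw [Function.update_of_ne (by decide), Function.update_self, h₁]
    simp only [Option.map_some]
    refine congrArg some (Prod.ext rfl (Prod.ext (by simp [c₁, dPlus]) ?_))
    funext j
    rcases eq_or_ne j (-1) with rfl | hj
    · simp [c₁, X]
    · rcases eq_or_ne j 1 with rfl | hj1
      · simp [c₁, X, Function.update_of_ne, hj]
      · simp [c₁, X, Function.update_of_ne, hj, hj1]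
  · show (δ (p₂, Function.update (Function.update X (-1) b₁) 1 a₂ 1)).map _ = _
    rw [Function.update_self, h₂]
    simp only [Option.map_some]
    refine congrArg some (Prod.ext rfl (Prod.ext (by simp [c₂, dMinus]) ?_))
    funext j
    rcases eq_or_ne j 1 with rfl | hj
    · simp [c₂, X]
    · rcases eq_or_ne j (-1) with rfl | hj1
      · simp [c₂, X, Function.update_of_ne, hj]
      · simp [c₂, X, Function.update_of_ne, hj, hj1]
end

section
/- If δ has the separability property but the injectivity property fails for δ, then the Turing machine M = (Q, Γ, δ) is not reversible: there exist two distinct configurations of M which have the same successor. -/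
variable {Q Γ : Type*}

/-- If `δ` has the separability property but the injectivity property fails, then the
Turing machine `M = (Q, Γ, δ)` is not reversible: there exist two distinct
configurations of `M` with the same successor. -/
theorem stmt_2 {Q Γ : Type*} [Fintype Q] [Fintype Γ] [Nonempty Q] (blank : Γ)
    (δ : Q × Γ → Option (Q × Γ × Dir))
    (hsep : Separability δ) (hinj : ¬ Injectivity δ) :
    ∃ c₁ c₂ c' : Q × ℤ × (ℤ → Γ), IsConf blank c₁ ∧ IsConf blank c₂ ∧ c₁ ≠ c₂ ∧
      succInf δ c₁ = some c' ∧ succInf δ c₂ = some c' := by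
  simp only [Injectivity, not_forall] at hinj
  obtain ⟨p₁, a₁, p₂, a₂, q, b, d₁, d₂, h₁, h₂, hne⟩ := hinj
  -- the two directions must agree by separability
  have hd : d₁ = d₂ := by
    have e₁ : (d₁ : ℤ) = -1 ∨ (d₁ : ℤ) = 1 := by
      have := d₁.2
      simp only [Finset.mem_insert, Finset.mem_singleton] at this
      exact this
    have e₂ : (d₂ : ℤ) = -1 ∨ (d₂ : ℤ) = 1 := by
      have := d₂.2
      simp only [Finset.mem_insert, Finset.mem_singleton] at this
      exact this
    have hmem : ∀ x : Q, x ∈ Qneg δ ∩ Qpos δ → False := by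
      intro x hx; rw [hsep] at hx; exact hx
    rcases e₁ with e₁ | e₁ <;> rcases e₂ with e₂ | e₂
    · exact Subtype.ext (e₁.trans e₂.symm)
    · exact absurd (hmem q ⟨⟨p₁, a₁, b, d₁, h₁, e₁⟩, ⟨p₂, a₂, b, d₂, h₂, e₂⟩⟩) (by simp)
    · exact absurd (hmem q ⟨⟨p₂, a₂, b, d₂, h₂, e₂⟩, ⟨p₁, a₁, b, d₁, h₁, e₁⟩⟩) (by simp)
    · exact Subtype.ext (e₁.trans e₂.symm)
  subst hd
  set X₁ : ℤ → Γ := Function.update (fun _ => blank) 0 a₁ with hX₁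
  set X₂ : ℤ → Γ := Function.update (fun _ => blank) 0 a₂ with hX₂
  refine ⟨(p₁, 0, X₁), (p₂, 0, X₂), (q, (d₁ : ℤ), Function.update (fun _ => blank) 0 b),
    ?_, ?_, ?_, ?_, ?_⟩
  · refine Set.Finite.subset (Set.finite_singleton 0) ?_
    intro j hj
    simp only [Set.mem_setOf_eq] at hj
    by_contra h
    simp only [Set.mem_singleton_iff] at h
    simp [hX₁, Function.update, h] at hj
  · refine Set.Finite.subset (Set.finite_singleton 0) ?_
    intro j hj
    simp only [Set.mem_setOf_eq] at hj
    by_contra h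
    simp only [Set.mem_singleton_iff] at h
    simp [hX₂, Function.update, h] at hj
  · intro h
    apply hne
    have hp : p₁ = p₂ := congrArg Prod.fst h
    have hX : X₁ = X₂ := congrArg (fun c => c.2.2) h
    have ha : a₁ = a₂ := by
      have := congrFun hX 0
      simpa [hX₁, hX₂] using this
    simp [hp, ha]
  · simp only [succInf]
    have : X₁ (0:ℤ) = a₁ := by simp [hX₁]
    rw [this, h₁]
    simp [hX₁, Function.update_idem]
  · simp only [succInf]
    have : X₂ (0:ℤ) = a₂ := by simp [hX₂]
    rw [this, h₂]
    simp [hX₂, Function.update_idem]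
end

section
/- If δ has both the separability property and the injectivity property, then the Turing machine M = (Q, Γ, δ) is reversible: whenever two configurations of M have the same successor, they are equal. -/
variable {Q Γ : Type*}

/-- If `δ` has both the separability property and the injectivity property, then the
Turing machine `M = (Q, Γ, δ)` is reversible: whenever two configurations of `M` have
the same successor, they are equal. -/
theorem stmt_3 {Q Γ : Type*} [Fintype Q] [Fintype Γ] [Nonempty Q] (blank : Γ)
    (δ : Q × Γ → Option (Q × Γ × Dir))
    (hsep : Separability δ) (hinj : Injectivity δ) :
    ∀ c₁ c₂ c' : Q × ℤ × (ℤ → Γ), IsConf blank c₁ → IsConf blank c₂ →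
      succInf δ c₁ = some c' → succInf δ c₂ = some c' → c₁ = c₂ := by
  rintro ⟨p₁, i₁, X₁⟩ ⟨p₂, i₂, X₂⟩ c' _ _ h₁ h₂
  simp only [succInf, Option.map_eq_some_iff] at h₁ h₂
  obtain ⟨⟨q₁, b₁, d₁⟩, hδ₁, he₁⟩ := h₁
  obtain ⟨⟨q₂, b₂, d₂⟩, hδ₂, he₂⟩ := h₂
  rw [← he₂] at he₁
  simp only [Prod.mk.injEq] at he₁
  obtain ⟨hq, hi, hX⟩ := he₁
  subst hq
  -- directions equal by separability
  have hd : d₁ = d₂ := by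
    by_contra hne
    have hmem : q₁ ∈ Qneg δ ∩ Qpos δ := by
      have h1 : (d₁ : ℤ) = -1 ∨ (d₁ : ℤ) = 1 := by
        have := d₁.2
        simp only [Finset.mem_insert, Finset.mem_singleton] at this
        exact this
      have h2 : (d₂ : ℤ) = -1 ∨ (d₂ : ℤ) = 1 := by
        have := d₂.2
        simp only [Finset.mem_insert, Finset.mem_singleton] at this
        exact this
      have hvals : (d₁ : ℤ) ≠ (d₂ : ℤ) := fun h => hne (Subtype.ext h)
      rcases h1 with h1 | h1 <;> rcases h2 with h2 | h2
      · exact absurd (h1.trans h2.symm) hvals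
      · exact ⟨⟨p₁, X₁ i₁, b₁, d₁, hδ₁, h1⟩, ⟨p₂, X₂ i₂, b₂, d₂, hδ₂, h2⟩⟩
      · exact ⟨⟨p₂, X₂ i₂, b₂, d₂, hδ₂, h2⟩, ⟨p₁, X₁ i₁, b₁, d₁, hδ₁, h1⟩⟩
      · exact absurd (h1.trans h2.symm) hvals
    rw [Separability] at hsep
    exact absurd hmem (by rw [hsep]; exact id)
  subst hd
  have hii : i₁ = i₂ := by omega
  subst hii
  have hb : b₁ = b₂ := by
    have := congrFun hX i₁
    simpa using this
  subst hb
  have hpa := hinj p₁ (X₁ i₁) p₂ (X₂ i₁) q₁ b₁ d₁ d₁ hδ₁ hδ₂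
  have hp : p₁ = p₂ := (Prod.ext_iff.mp hpa).1
  have ha : X₁ i₁ = X₂ i₁ := (Prod.ext_iff.mp hpa).2
  have hXX : X₁ = X₂ := by
    funext j
    by_cases hj : j = i₁
    · subst hj; exact ha
    · have := congrFun hX j
      simpa [Function.update, hj] using this
  simp [hp, hXX]
end

section
/- Suppose δ has the separability and injectivity properties, and let Q₋, Q₊ be disjoint subsets of Q with Q₋₁ ⊆ Q₋, Q₊₁ ⊆ Q₊ and Q₋ ∪ Q₊ = Q. Then there exists a total function δ* : Q × Γ → Q × Γ × {-1,+1} extending δ (i.e., δ(p,a) = some t implies δ*(p,a) = t) such that: (i) the map (p,a) ↦ (q,b), where δ*(p,a) = (q,b,d), is a bijection of Q × Γ onto itself; (ii) whenever δ*(p,a) = (q,b,d), d = -1 if q ∈ Q₋ and d = +1 if q ∈ Q₊; consequently the total-transition machine (Q, Γ, δ*) has the separability and injectivity properties and is reversible. -/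
variable {Q Γ : Type*}

/-- If `δ` has the separability and injectivity properties, and `Q₋, Q₊` are disjoint
sets of states covering `Q` with `Q₋₁ ⊆ Q₋` and `Q₊₁ ⊆ Q₊`, then `δ` extends to a total
transition function `δ*` such that (i) `(p,a) ↦ (q,b)` (first two components of
`δ*(p,a)`) is a bijection of `Q × Γ`, (ii) the direction of `δ*(p,a)` is `-1` when its
target state is in `Q₋` and `+1` when it is in `Q₊`; consequently the total machine
`(Q, Γ, δ*)` has the separability and injectivity properties and is reversible. -/
theorem stmt_4 {Q Γ : Type*} [Fintype Q] [Fintype Γ] [Nonempty Q] (blank : Γ)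
    (δ : Q × Γ → Option (Q × Γ × Dir))
    (hsep : Separability δ) (hinj : Injectivity δ)
    (Qm Qp : Set Q) (hdisj : Disjoint Qm Qp)
    (hm : Qneg δ ⊆ Qm) (hp : Qpos δ ⊆ Qp) (hun : Qm ∪ Qp = Set.univ) :
    ∃ δs : Q × Γ → Q × Γ × Dir,
      (∀ p a t, δ (p, a) = some t → δs (p, a) = t) ∧
      Function.Bijective (fun pa : Q × Γ => ((δs pa).1, (δs pa).2.1)) ∧
      (∀ p a, ((δs (p, a)).1 ∈ Qm → ((δs (p, a)).2.2 : ℤ) = -1) ∧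
              ((δs (p, a)).1 ∈ Qp → ((δs (p, a)).2.2 : ℤ) = 1)) ∧
      Separability (fun pa => some (δs pa)) ∧ Injectivity (fun pa => some (δs pa)) ∧
      ReversibleInf (fun pa => some (δs pa)) blank := by
  classical
  -- Domain of the partial transition function
  set D : Set (Q × Γ) := {pa | (δ pa).isSome} with hD
  -- The first-two-components map on the domain
  set F : D → Q × Γ := fun x => (((δ x.1).get x.2).1, ((δ x.1).get x.2).2.1) with hFdef
  have hFspec : ∀ (x : D) t, δ x.1 = some t → F x = (t.1, t.2.1) := by
    intro x t ht
    simp [hFdef, ht]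
  have hFinj : Function.Injective F := by
    rintro x y hxy
    obtain ⟨tx, hx⟩ := Option.isSome_iff_exists.mp x.2
    obtain ⟨ty, hy⟩ := Option.isSome_iff_exists.mp y.2
    rw [hFspec x tx hx, hFspec y ty hy] at hxy
    have h1 : tx.1 = ty.1 := (Prod.ext_iff.mp hxy).1
    have h2 : tx.2.1 = ty.2.1 := (Prod.ext_iff.mp hxy).2
    have hx' : δ (x.1.1, x.1.2) = some (tx.1, tx.2.1, tx.2.2) := by
      simpa using hx
    have hy' : δ (y.1.1, y.1.2) = some (tx.1, tx.2.1, ty.2.2) := by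
      rw [h1, h2]; simpa using hy
    have := hinj x.1.1 x.1.2 y.1.1 y.1.2 tx.1 tx.2.1 tx.2.2 ty.2.2 hx' hy'
    exact Subtype.ext (by simpa [Prod.ext_iff] using this)
  have hcard : Fintype.card ↥Dᶜ = Fintype.card ↥(Set.range F)ᶜ := by
    have h1 : Fintype.card (Set.range F) = Fintype.card D :=
      Set.card_range_of_injective hFinj
    have h2 := Fintype.card_compl_set D
    have h3 := Fintype.card_compl_set (Set.range F)
    omega
  obtain ⟨e⟩ := Fintype.card_eq.mp hcard
  set g : Q × Γ → Q × Γ := fun pa =>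
    if h : pa ∈ D then F ⟨pa, h⟩ else (e ⟨pa, h⟩ : Q × Γ) with hg
  have hginj : Function.Injective g := by
    intro x y hxy
    by_cases hx : x ∈ D <;> by_cases hy : y ∈ D <;> simp [hg, hx, hy] at hxy
    · exact congrArg Subtype.val (hFinj hxy)
    · exact absurd (hxy ▸ Set.mem_range_self (⟨x, hx⟩ : D)) (e ⟨y, hy⟩).2
    · exact absurd (hxy ▸ Set.mem_range_self (⟨y, hy⟩ : D)) (e ⟨x, hx⟩).2
    · exact congrArg Subtype.val (e.injective (Subtype.ext hxy))
  have hgbij : Function.Bijective g := (Finite.injective_iff_bijective).mp hginj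
  set dir : Q → Dir := fun q => if q ∈ Qm then dMinus else dPlus with hdir
  refine ⟨fun pa => ((g pa).1, (g pa).2, dir (g pa).1), ?_, ?_, ?_, ?_, ?_, ?_⟩
  · -- extension
    intro p a t ht
    have hmem : (p, a) ∈ D := by simp [hD, ht]
    have hgpa : g (p, a) = (t.1, t.2.1) := by
      rw [hg]; simp only [hmem, dif_pos]; exact hFspec ⟨(p,a), hmem⟩ t ht
    have hdval : (t.2.2 : ℤ) = -1 ∨ (t.2.2 : ℤ) = 1 := by
      have := t.2.2.2
      rw [Finset.mem_insert, Finset.mem_singleton] at this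
      exact this
    have hdirt : dir t.1 = t.2.2 := by
      rcases hdval with hv | hv
      · have hqm : t.1 ∈ Qm := hm ⟨p, a, t.2.1, t.2.2, by simpa using ht, hv⟩
        simp only [hdir, if_pos hqm]
        exact Subtype.ext (by simp [dMinus, hv])
      · have hqp : t.1 ∈ Qp := hp ⟨p, a, t.2.1, t.2.2, by simpa using ht, hv⟩
        have hqm : t.1 ∉ Qm := fun h => hdisj.ne_of_mem h hqp rfl
        simp only [hdir, if_neg hqm]
        exact Subtype.ext (by simp [dPlus, hv])
    simp [hgpa, hdirt]
  · -- bijectivity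
    exact hgbij
  · -- directions
    intro p a
    constructor
    · intro h
      simp only [hdir, if_pos h] at *
      simp [dir, h, dMinus]
    · intro h
      have hnm : (g (p, a)).1 ∉ Qm := fun h' => hdisj.ne_of_mem h' h rfl
      simp [dir, hnm, dPlus]
  · -- separability
    ext q
    simp only [Set.mem_inter_iff, Set.mem_empty_iff_false, iff_false]
    rintro ⟨⟨p1, a1, b1, d1, h1, hd1⟩, ⟨p2, a2, b2, d2, h2, hd2⟩⟩
    have e1 : dir (g (p1, a1)).1 = d1 := congrArg (Prod.snd ∘ Prod.snd) (Option.some_injective _ h1)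
    have e1' : (g (p1, a1)).1 = q := congrArg Prod.fst (Option.some_injective _ h1)
    have e2 : dir (g (p2, a2)).1 = d2 := congrArg (Prod.snd ∘ Prod.snd) (Option.some_injective _ h2)
    have e2' : (g (p2, a2)).1 = q := congrArg Prod.fst (Option.some_injective _ h2)
    rw [e1'] at e1; rw [e2'] at e2
    rw [← e1] at hd1; rw [← e2] at hd2
    by_cases hq : q ∈ Qm <;> simp [dir, hq, dMinus, dPlus] at hd1 hd2 <;> omega
  · -- injectivity
    intro p1 a1 p2 a2 q b d1 d2 h1 h2
    have h1' := Option.some_injective _ h1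
    have h2' := Option.some_injective _ h2
    have : g (p1, a1) = g (p2, a2) := by
      have e1 : g (p1, a1) = (q, b) := by
        have := congrArg Prod.fst h1'
        have := congrArg (Prod.fst ∘ Prod.snd) h1'
        ext <;> simp_all
      have e2 : g (p2, a2) = (q, b) := by
        have := congrArg Prod.fst h2'
        have := congrArg (Prod.fst ∘ Prod.snd) h2'
        ext <;> simp_all
      rw [e1, e2]
    exact hginj this
  · -- reversibility
    rintro ⟨p1, i1, X1⟩ ⟨p2, i2, X2⟩ c' _ _ h1 h2
    simp only [succInf, Option.map_some] at h1 h2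
    have h1' := Option.some_injective _ (h1.trans h2.symm)
    obtain ⟨hq, hrest⟩ := Prod.ext_iff.mp h1'
    obtain ⟨hi, hX⟩ := Prod.ext_iff.mp hrest
    simp only at hq hi hX
    rw [hq] at hi
    have hii : i1 = i2 := by omega
    subst hii
    have hb : (g (p1, X1 i1)).2 = (g (p2, X2 i1)).2 := by
      have := congrFun hX i1
      simpa using this
    have hgg : g (p1, X1 i1) = g (p2, X2 i1) := Prod.ext hq hb
    have hpa : (p1, X1 i1) = (p2, X2 i1) := hginj hgg
    have hp12 : p1 = p2 := congrArg Prod.fst hpa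
    have ha12 : X1 i1 = X2 i1 := congrArg Prod.snd hpa
    have hXeq : X1 = X2 := by
      funext j
      by_cases hj : j = i1
      · subst hj; exact ha12
      · have := congrFun hX j
        simpa [Function.update, hj] using this
    simp [hp12, hXeq]
end

section
/- Let N ≥ 3. The looped-tape Turing machine M = (Q, Γ, δ)_N is reversible if and only if δ has both the separability property and the injectivity property. -/
variable {Q Γ : Type*}

/-- The successor (partial) function on configurations `(p, i, X)` of the looped-tape
Turing machine with `N` cells (indexed by `ZMod N`) and transition function `δ`. -/
def succMod (N : ℕ) (δ : Q × Γ → Option (Q × Γ × Dir)) (c : Q × ZMod N × (ZMod N → Γ)) :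
    Option (Q × ZMod N × (ZMod N → Γ)) :=
  (δ (c.1, c.2.2 c.2.1)).map fun t =>
    (t.1, c.2.1 + ((t.2.2 : ℤ) : ZMod N), Function.update c.2.2 c.2.1 t.2.1)

/-- The looped-tape machine is reversible: every configuration has at most one
predecessor. -/
def ReversibleMod (N : ℕ) (δ : Q × Γ → Option (Q × Γ × Dir)) : Prop :=
  ∀ c₁ c₂ c', succMod N δ c₁ = some c' → succMod N δ c₂ = some c' → c₁ = c₂


lemma dir_ext {d₁ d₂ : Dir} (h : (d₁ : ℤ) = (d₂ : ℤ)) : d₁ = d₂ := Subtype.ext h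

lemma two_ne_zero_zmod {N : ℕ} (hN : 3 ≤ N) : (2 : ZMod N) ≠ 0 := by
  intro h
  have h2 : ((2 : ℕ) : ZMod N) = 0 := by exact_mod_cast h
  rw [ZMod.natCast_eq_zero_iff] at h2
  have := Nat.le_of_dvd (by norm_num) h2
  omega

/-- Let `N ≥ 3`. The looped-tape Turing machine `M = (Q, Γ, δ)_N` is reversible if and
only if `δ` has both the separability property and the injectivity property. -/
theorem stmt_5 {Q Γ : Type*} [Fintype Q] [Fintype Γ] [Nonempty Q]
    (δ : Q × Γ → Option (Q × Γ × Dir)) (N : ℕ) (hN : 3 ≤ N) :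
    ReversibleMod N δ ↔ Separability δ ∧ Injectivity δ := by
  constructor
  · intro hRev
    have hsep : Separability δ := by
      rw [Separability, Set.eq_empty_iff_forall_notMem]
      rintro q ⟨⟨p₁, a₁, b₁, d₁, hδ₁, hd₁⟩, ⟨p₂, a₂, b₂, d₂, hδ₂, hd₂⟩⟩
      have h2 : (0 : ZMod N) ≠ -2 := by
        intro h
        apply two_ne_zero_zmod hN
        linear_combination h
      set Y : ZMod N → Γ := fun _ => b₁ with hY
      set X₁ : ZMod N → Γ := Function.update (Function.update Y (-2) b₂) 0 a₁ with hX₁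
      set X₂ : ZMod N → Γ := Function.update (Function.update Y 0 b₁) (-2) a₂ with hX₂
      have e₁ : succMod N δ (p₁, 0, X₁) =
          some (q, 0 + ((d₁ : ℤ) : ZMod N), Function.update X₁ 0 b₁) := by
        have : X₁ 0 = a₁ := by simp [hX₁]
        simp [succMod, this, hδ₁]
      have e₂ : succMod N δ (p₂, -2, X₂) =
          some (q, -2 + ((d₂ : ℤ) : ZMod N), Function.update X₂ (-2) b₂) := by
        have : X₂ (-2) = a₂ := by simp [hX₂]
        simp [succMod, this, hδ₂]
      rw [hd₁] at e₁
      rw [hd₂] at e₂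
      have hpos : (0 : ZMod N) + ((-1 : ℤ) : ZMod N) = -2 + ((1 : ℤ) : ZMod N) := by
        push_cast
        ring
      have htape : Function.update X₁ 0 b₁ = Function.update X₂ (-2) b₂ := by
        rw [hX₁, hX₂, Function.update_idem, Function.update_idem,
          Function.update_comm h2]
      rw [hpos, htape] at e₁
      have := hRev _ _ _ e₁ e₂
      exact h2 (congrArg (fun c => c.2.1) this)
    refine ⟨hsep, ?_⟩
    intro p₁ a₁ p₂ a₂ q b d₁ d₂ hδ₁ hδ₂
    have hd : d₁ = d₂ := by
      rcases dir_cases d₁ with h1 | h1 <;> rcases dir_cases d₂ with h2 | h2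
      · exact dir_ext (h1.trans h2.symm)
      · exfalso
        rw [Separability, Set.eq_empty_iff_forall_notMem] at hsep
        exact hsep q ⟨⟨p₁, a₁, b, d₁, hδ₁, h1⟩, ⟨p₂, a₂, b, d₂, hδ₂, h2⟩⟩
      · exfalso
        rw [Separability, Set.eq_empty_iff_forall_notMem] at hsep
        exact hsep q ⟨⟨p₂, a₂, b, d₂, hδ₂, h2⟩, ⟨p₁, a₁, b, d₁, hδ₁, h1⟩⟩
      · exact dir_ext (h1.trans h2.symm)
    subst hd
    set Y : ZMod N → Γ := fun _ => b with hY
    have e₁ : succMod N δ (p₁, 0, Function.update Y 0 a₁) =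
        some (q, 0 + ((d₁ : ℤ) : ZMod N), Function.update Y 0 b) := by
      simp [succMod, hδ₁, Function.update_idem]
    have e₂ : succMod N δ (p₂, 0, Function.update Y 0 a₂) =
        some (q, 0 + ((d₁ : ℤ) : ZMod N), Function.update Y 0 b) := by
      simp [succMod, hδ₂, Function.update_idem]
    have heq := hRev _ _ _ e₁ e₂
    have hp : p₁ = p₂ := congrArg (fun c => c.1) heq
    have ha : a₁ = a₂ := by
      have := congrArg (fun c => c.2.2 0) heq
      simpa using this
    rw [hp, ha]
  · rintro ⟨hsep, hinj⟩ ⟨p₁, i₁, X₁⟩ ⟨p₂, i₂, X₂⟩ c' h₁ h₂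
    rcases hδ₁ : δ (p₁, X₁ i₁) with _ | ⟨q₁, b₁, d₁⟩
    · simp [succMod, hδ₁] at h₁
    rcases hδ₂ : δ (p₂, X₂ i₂) with _ | ⟨q₂, b₂, d₂⟩
    · simp [succMod, hδ₂] at h₂
    simp only [succMod, hδ₁, Option.map_some] at h₁
    simp only [succMod, hδ₂, Option.map_some] at h₂
    rw [← h₂] at h₁
    have h₁' := Option.some.inj h₁
    simp only [Prod.mk.injEq] at h₁'
    obtain ⟨hq, hpos, htape⟩ := h₁' 
    subst hq
    have hd : d₁ = d₂ := by
      rcases dir_cases d₁ with h1 | h1 <;> rcases dir_cases d₂ with h2 | h2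
      · exact dir_ext (h1.trans h2.symm)
      · exfalso
        rw [Separability, Set.eq_empty_iff_forall_notMem] at hsep
        exact hsep q₁ ⟨⟨p₁, X₁ i₁, b₁, d₁, hδ₁, h1⟩, ⟨p₂, X₂ i₂, b₂, d₂, hδ₂, h2⟩⟩
      · exfalso
        rw [Separability, Set.eq_empty_iff_forall_notMem] at hsep
        exact hsep q₁ ⟨⟨p₂, X₂ i₂, b₂, d₂, hδ₂, h2⟩, ⟨p₁, X₁ i₁, b₁, d₁, hδ₁, h1⟩⟩
      · exact dir_ext (h1.trans h2.symm)
    subst hd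
    have hi : i₁ = i₂ := add_right_cancel hpos
    subst hi
    have hb : b₁ = b₂ := by
      have := congrFun htape i₁
      simpa using this
    subst hb
    have hpa := hinj p₁ (X₁ i₁) p₂ (X₂ i₁) q₁ b₁ d₁ d₁ hδ₁ hδ₂
    have hp : p₁ = p₂ := congrArg Prod.fst hpa
    have haX : X₁ i₁ = X₂ i₁ := congrArg Prod.snd hpa
    have hX : X₁ = X₂ := by
      funext j
      by_cases hj : j = i₁
      · rw [hj]; exact haX
      · have := congrFun htape j
        simpa [Function.update_of_ne hj] using this
    rw [hp, hX]
end

section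
/- Let N ≥ 3. The looped-tape Turing machine M = (Q, Γ, δ)_N is reversible if and only if the infinite-tape Turing machine M∞ = (Q, Γ, δ) is reversible. -/
variable {Q Γ : Type*}

set_option linter.unusedSectionVars false

def succGen {I : Type*} [AddGroupWithOne I] [DecidableEq I]
    (δ : Q × Γ → Option (Q × Γ × Dir))
    (c : Q × I × (I → Γ)) : Option (Q × I × (I → Γ)) :=
  (δ (c.1, c.2.2 c.2.1)).map fun t =>
    (t.1, c.2.1 + ((t.2.2 : ℤ) : I), Function.update c.2.2 c.2.1 t.2.1)

section Gen
variable {I : Type*} [AddGroupWithOne I] [DecidableEq I] (blank : Γ)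
  (δ : Q × Γ → Option (Q × Γ × Dir))

lemma neg_one_ne_one (h2 : (2 : I) ≠ 0) : (-1 : I) ≠ 1 := by
  intro h
  apply h2
  have h0 : (-1 : I) + 1 = 0 := neg_add_cancel 1
  rw [h] at h0
  rw [show (2:I) = 1 + 1 from one_add_one_eq_two.symm, h0]

lemma helper_lr (h2 : (2 : I) ≠ 0)
    (hrev : ∀ c₁ c₂ c' : Q × I × (I → Γ),
        {j | c₁.2.2 j ≠ blank}.Finite → {j | c₂.2.2 j ≠ blank}.Finite →
        succGen δ c₁ = some c' → succGen δ c₂ = some c' → c₁ = c₂)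
    (q : Q) (p₁ a₁ b₁ p₂ a₂ b₂ : _) (d₁ d₂ : Dir)
    (hδ₁ : δ (p₁, a₁) = some (q, b₁, d₁)) (hd₁ : (d₁ : ℤ) = -1)
    (hδ₂ : δ (p₂, a₂) = some (q, b₂, d₂)) (hd₂ : (d₂ : ℤ) = 1) : False := by
  set X₁ : I → Γ := fun j => if j = 0 then a₂ else if j = 2 then b₁ else blank with hX₁
  set X₂ : I → Γ := fun j => if j = 0 then b₂ else if j = 2 then a₁ else blank with hX₂
  set Y : I → Γ := fun j => if j = 0 then b₂ else if j = 2 then b₁ else blank with hY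
  have key := hrev (p₂, (0:I), X₁) (p₁, (2:I), X₂) (q, (1:I), Y) ?_ ?_ ?_ ?_
  · have := congrArg (fun c => c.2.1) key
    simp only at this
    exact h2 this.symm
  · apply Set.Finite.subset ((Set.finite_singleton (2:I)).insert (0:I))
    intro j hj
    simp only [Set.mem_setOf_eq, hX₁] at hj
    by_contra hmem
    simp only [Set.mem_insert_iff, Set.mem_singleton_iff, not_or] at hmem
    rw [if_neg hmem.1, if_neg hmem.2] at hj
    exact hj rfl
  · apply Set.Finite.subset ((Set.finite_singleton (2:I)).insert (0:I))
    intro j hj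
    simp only [Set.mem_setOf_eq, hX₂] at hj
    by_contra hmem
    simp only [Set.mem_insert_iff, Set.mem_singleton_iff, not_or] at hmem
    rw [if_neg hmem.1, if_neg hmem.2] at hj
    exact hj rfl
  · -- succGen δ (p₂, 0, X₁) = some (q, 1, Y)
    have hval : X₁ 0 = a₂ := by simp [hX₁]
    have hpos : (0:I) + ((d₂ : ℤ) : I) = 1 := by rw [hd₂]; simp
    have hup : Function.update X₁ 0 b₂ = Y := by
      funext j
      by_cases hj : j = 0
      · subst hj; simp [hY]
      · rw [Function.update_of_ne hj]
        simp only [hX₁, hY, if_neg hj]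
    simp only [succGen, hval, hδ₂, Option.map_some, hpos, hup]
  · -- succGen δ (p₁, 2, X₂) = some (q, 1, Y)
    have hval : X₂ 2 = a₁ := by simp [hX₂, h2]
    have hpos : (2:I) + ((d₁ : ℤ) : I) = 1 := by
      rw [hd₁]
      push_cast
      rw [← one_add_one_eq_two, add_assoc, add_neg_cancel, add_zero]
    have hup : Function.update X₂ 2 b₁ = Y := by
      funext j
      by_cases hj : j = 2
      · subst hj; simp [hY, h2]
      · rw [Function.update_of_ne hj]
        simp only [hX₂, hY]
        by_cases hj0 : j = 0 <;> simp [hj0, hj]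
    simp only [succGen, hval, hδ₁, Option.map_some, hpos, hup]

lemma rev_gen_iff (h2 : (2 : I) ≠ 0) :
    (∀ c₁ c₂ c' : Q × I × (I → Γ),
        {j | c₁.2.2 j ≠ blank}.Finite → {j | c₂.2.2 j ≠ blank}.Finite →
        succGen δ c₁ = some c' → succGen δ c₂ = some c' → c₁ = c₂) ↔
      Separability δ ∧ Injectivity δ := by
  have hcast : ∀ d₁ d₂ : Dir, ((d₁ : ℤ) : I) = ((d₂ : ℤ) : I) → d₁ = d₂ := by
    intro d₁ d₂ h
    rcases dir_cases d₁ with h₁ | h₁ <;> rcases dir_cases d₂ with h₂ | h₂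
    · exact Subtype.ext (h₁.trans h₂.symm)
    · exfalso; rw [h₁, h₂] at h; push_cast at h; exact neg_one_ne_one h2 h
    · exfalso; rw [h₁, h₂] at h; push_cast at h; exact neg_one_ne_one h2 h.symm
    · exact Subtype.ext (h₁.trans h₂.symm)
  constructor
  · intro hrev
    constructor
    · -- Separability
      ext q
      simp only [Set.mem_inter_iff, Set.mem_empty_iff_false, iff_false, not_and]
      intro hqn hqp
      obtain ⟨p₁, a₁, b₁, d₁, hδ₁, hd₁⟩ := hqn
      obtain ⟨p₂, a₂, b₂, d₂, hδ₂, hd₂⟩ := hqp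
      exact helper_lr blank δ h2 hrev q p₁ a₁ b₁ p₂ a₂ b₂ d₁ d₂ hδ₁ hd₁ hδ₂ hd₂
    · -- Injectivity
      intro p₁ a₁ p₂ a₂ q b d₁ d₂ h₁ h₂
      by_cases hd : d₁ = d₂
      · subst hd
        by_contra hne
        set X₁ : I → Γ := fun j => if j = 0 then a₁ else blank with hX₁
        set X₂ : I → Γ := fun j => if j = 0 then a₂ else blank with hX₂
        set Y : I → Γ := fun j => if j = 0 then b else blank with hY
        have key := hrev (p₁, (0:I), X₁) (p₂, (0:I), X₂) (q, ((d₁:ℤ):I), Y) ?_ ?_ ?_ ?_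
        · apply hne
          have hp := congrArg (fun c => c.1) key
          have hXeq := congrArg (fun c => c.2.2) key
          simp only at hp hXeq
          have ha : a₁ = a₂ := by
            have := congrFun hXeq 0
            simpa [hX₁, hX₂] using this
          rw [hp, ha]
        · apply Set.Finite.subset (Set.finite_singleton (0:I))
          intro j hj
          simp only [Set.mem_setOf_eq, hX₁] at hj
          by_contra hmem
          simp only [Set.mem_singleton_iff] at hmem
          rw [if_neg hmem] at hj; exact hj rfl
        · apply Set.Finite.subset (Set.finite_singleton (0:I))
          intro j hj
          simp only [Set.mem_setOf_eq, hX₂] at hj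
          by_contra hmem
          simp only [Set.mem_singleton_iff] at hmem
          rw [if_neg hmem] at hj; exact hj rfl
        · have hval : X₁ 0 = a₁ := by simp [hX₁]
          have hup : Function.update X₁ 0 b = Y := by
            funext j
            by_cases hj : j = 0
            · subst hj; simp [hY]
            · rw [Function.update_of_ne hj]; simp [hX₁, hY, hj]
          simp only [succGen, hval, h₁, Option.map_some, hup, zero_add]
        · have hval : X₂ 0 = a₂ := by simp [hX₂]
          have hup : Function.update X₂ 0 b = Y := by
            funext j
            by_cases hj : j = 0
            · subst hj; simp [hY]
            · rw [Function.update_of_ne hj]; simp [hX₂, hY, hj]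
          simp only [succGen, hval, h₂, Option.map_some, hup, zero_add]
      · exfalso
        rcases dir_cases d₁ with h₁' | h₁' <;> rcases dir_cases d₂ with h₂' | h₂'
        · exact hd (Subtype.ext (h₁'.trans h₂'.symm))
        · exact helper_lr blank δ h2 hrev q p₁ a₁ b p₂ a₂ b d₁ d₂ h₁ h₁' h₂ h₂'
        · exact helper_lr blank δ h2 hrev q p₂ a₂ b p₁ a₁ b d₂ d₁ h₂ h₂' h₁ h₁'
        · exact hd (Subtype.ext (h₁'.trans h₂'.symm))
  · rintro ⟨hsep, hinj⟩ ⟨p₁, i₁, X₁⟩ ⟨p₂, i₂, X₂⟩ c' _ _ h₁ h₂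
    simp only [succGen, Option.map_eq_some_iff] at h₁ h₂
    obtain ⟨⟨q₁, b₁, d₁⟩, hδ₁, he₁⟩ := h₁
    obtain ⟨⟨q₂, b₂, d₂⟩, hδ₂, he₂⟩ := h₂
    rw [← he₂] at he₁
    obtain ⟨hq, hi, hX⟩ : q₁ = q₂ ∧ i₁ + ((d₁:ℤ):I) = i₂ + ((d₂:ℤ):I) ∧
        Function.update X₁ i₁ b₁ = Function.update X₂ i₂ b₂ := by
      simpa [Prod.ext_iff] using he₁
    subst hq
    by_cases hii : i₁ = i₂
    · subst hii
      have hdeq : d₁ = d₂ := hcast d₁ d₂ (add_left_cancel hi)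
      subst hdeq
      have hb : b₁ = b₂ := by
        have := congrFun hX i₁
        simpa using this
      subst hb
      have hpa := hinj p₁ (X₁ i₁) p₂ (X₂ i₁) q₁ b₁ d₁ d₁ hδ₁ hδ₂
      have hp : p₁ = p₂ := congrArg Prod.fst hpa
      have ha : X₁ i₁ = X₂ i₁ := congrArg Prod.snd hpa
      have hXX : X₁ = X₂ := by
        funext j
        by_cases hj : j = i₁
        · subst hj; exact ha
        · have := congrFun hX j
          rwa [Function.update_of_ne hj, Function.update_of_ne hj] at this
      rw [hp, hXX]
    · exfalso
      have hdd : (d₁ : ℤ) ≠ (d₂ : ℤ) := by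
        intro h
        apply hii
        have hc : ((d₁:ℤ):I) = ((d₂:ℤ):I) := by rw [h]
        rw [hc] at hi
        exact add_right_cancel hi
      have hmem : q₁ ∈ Qneg δ ∩ Qpos δ := by
        rcases dir_cases d₁ with h₁' | h₁' <;> rcases dir_cases d₂ with h₂' | h₂'
        · exact absurd (h₁'.trans h₂'.symm) hdd
        · exact ⟨⟨p₁, X₁ i₁, b₁, d₁, hδ₁, h₁'⟩, ⟨p₂, X₂ i₂, b₂, d₂, hδ₂, h₂'⟩⟩
        · exact ⟨⟨p₂, X₂ i₂, b₂, d₂, hδ₂, h₂'⟩, ⟨p₁, X₁ i₁, b₁, d₁, hδ₁, h₁'⟩⟩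
        · exact absurd (h₁'.trans h₂'.symm) hdd
      rw [hsep] at hmem
      exact hmem
end Gen

lemma succInf_eq_succGen (δ : Q × Γ → Option (Q × Γ × Dir)) :
    succInf δ = succGen (I := ℤ) δ := by
  funext c
  simp [succInf, succGen, Int.cast_id]

lemma succMod_eq_succGen (N : ℕ) (δ : Q × Γ → Option (Q × Γ × Dir)) :
    succMod N δ = succGen (I := ZMod N) δ := rfl


/-- Let `N ≥ 3`. The looped-tape Turing machine `M = (Q, Γ, δ)_N` is reversible if and
only if the infinite-tape Turing machine `M∞ = (Q, Γ, δ)` is reversible. -/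
theorem stmt_6 {Q Γ : Type*} [Fintype Q] [Fintype Γ] [Nonempty Q] (blank : Γ)
    (δ : Q × Γ → Option (Q × Γ × Dir)) (N : ℕ) (hN : 3 ≤ N) :
    ReversibleMod N δ ↔ ReversibleInf δ blank := by
  haveI : NeZero N := ⟨by omega⟩
  have h2Z : (2 : ZMod N) ≠ 0 := by
    have h : ((2 : ℕ) : ZMod N) ≠ 0 := by
      rw [Ne, ZMod.natCast_eq_zero_iff]
      intro hdvd
      have := Nat.le_of_dvd (by norm_num) hdvd
      omega
    simpa using h
  have hmod : ReversibleMod N δ ↔ Separability δ ∧ Injectivity δ := by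
    rw [← rev_gen_iff (I := ZMod N) blank δ h2Z]
    constructor
    · intro h c₁ c₂ c' _ _ h₁ h₂
      exact h c₁ c₂ c' (by rwa [succMod_eq_succGen]) (by rwa [succMod_eq_succGen])
    · intro h c₁ c₂ c' h₁ h₂
      exact h c₁ c₂ c' (Set.toFinite _) (Set.toFinite _)
        (by rwa [← succMod_eq_succGen]) (by rwa [← succMod_eq_succGen])
  have hinf : ReversibleInf δ blank ↔ Separability δ ∧ Injectivity δ := by
    rw [← rev_gen_iff (I := ℤ) blank δ (by norm_num)]
    constructor
    · intro h c₁ c₂ c' h₁ h₂ h₃ h₄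
      exact h c₁ c₂ c' h₁ h₂ (by rw [succInf_eq_succGen]; exact h₃)
        (by rw [succInf_eq_succGen]; exact h₄)
    · intro h c₁ c₂ c' h₁ h₂ h₃ h₄
      exact h c₁ c₂ c' h₁ h₂ (by rw [← succInf_eq_succGen]; exact h₃)
        (by rw [← succInf_eq_succGen]; exact h₄)
  rw [hmod, hinf]
end

section
/- Let N be even, N ≥ 4. For every configuration (p, i, X) ∈ Q × ZMod N × (ZMod N → Γ) of the looped-tape machine, with δ(p, X(i)) = (q, b, d), the composition of the two row maps satisfies R₁(R₀(p, i, X)) = (q, i + d, X[i ↦ b]); that is, the two staggered rows of brick gates transform any configuration into its successor. -/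
variable {Q Γ : Type*}

/-- Annotated states: `Q* = Q ⊎ Q↑ ⊎ Q↓` (plain, up-marked, down-marked). -/
abbrev QStar (Q : Type*) : Type _ := Q ⊕ Q ⊕ Q

/-- The plain (unannotated) state `q`. -/
def pl {Q : Type*} : Q → QStar Q := Sum.inl
/-- The up-annotated state `q↑`. -/
def up {Q : Type*} : Q → QStar Q := fun q => Sum.inr (Sum.inl q)
/-- The down-annotated state `q↓`. -/
def dn {Q : Type*} : Q → QStar Q := fun q => Sum.inr (Sum.inr q)

/-- Brick data: `(q*, a, 0, c)` (head in the left cell), `(0, c, q*, a)` (head in the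
right cell), or `(0, a, 0, c)` (no head). -/
abbrev BrickD (Q Γ : Type*) : Type _ := (QStar Q × Γ × Γ) ⊕ (Γ × QStar Q × Γ) ⊕ (Γ × Γ)

/-- The brick datum `(q*, a, 0, c)`: head in the left cell. -/
def lH {Q Γ : Type*} (q : QStar Q) (a c : Γ) : BrickD Q Γ := Sum.inl (q, a, c)
/-- The brick datum `(0, c, q*, a)`: head in the right cell. -/
def rH {Q Γ : Type*} (c : Γ) (q : QStar Q) (a : Γ) : BrickD Q Γ :=
  Sum.inr (Sum.inl (c, q, a))
/-- The brick datum `(0, a, 0, c)`: no head. -/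
def nH {Q Γ : Type*} (a c : Γ) : BrickD Q Γ := Sum.inr (Sum.inr (a, c))

open Classical in
/-- The brick function `f`, for a total transition function `δ` whose set of
positive states is `Qp` (the negative states being the rest). -/
noncomputable def brickF (δ : Q × Γ → Q × Γ × Dir) (Qp : Set Q) :
    BrickD Q Γ → BrickD Q Γ :=
  fun x =>
    match x with
    | Sum.inr (Sum.inr (a, c)) => nH a c
    | Sum.inl (Sum.inl p, a, c) =>
        if ((δ (p, a)).2.2 : ℤ) = 1 then rH (δ (p, a)).2.1 (up (δ (p, a)).1) c
        else lH (dn (δ (p, a)).1) (δ (p, a)).2.1 c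
    | Sum.inr (Sum.inl (c, Sum.inl p, a)) =>
        if ((δ (p, a)).2.2 : ℤ) = 1 then rH c (dn (δ (p, a)).1) (δ (p, a)).2.1
        else lH (up (δ (p, a)).1) c (δ (p, a)).2.1
    | Sum.inl (Sum.inr (Sum.inl q), c, b) =>
        if q ∈ Qp then lH (pl q) c b else rH b (up q) c
    | Sum.inr (Sum.inl (b, Sum.inr (Sum.inl q), c)) =>
        if q ∈ Qp then lH (up q) c b else rH b (pl q) c
    | Sum.inl (Sum.inr (Sum.inr q), b, c) =>
        if q ∈ Qp then rH b (pl q) c else rH c (dn q) b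
    | Sum.inr (Sum.inl (c, Sum.inr (Sum.inr q), b)) =>
        if q ∈ Qp then lH (dn q) b c else lH (pl q) c b

/-- Separability for a total transition function: whenever `δ(p,a) = (q,b,d)`,
`d = +1` if `q ∈ Qp` and `d = -1` if `q ∈ Qm`. -/
def SepT (δ : Q × Γ → Q × Γ × Dir) (Qm Qp : Set Q) : Prop :=
  ∀ p a q b d, δ (p, a) = (q, b, d) →
    (q ∈ Qp → (d : ℤ) = 1) ∧ (q ∈ Qm → (d : ℤ) = -1)

/-- Injectivity for a total transition function. -/
def InjT (δ : Q × Γ → Q × Γ × Dir) : Prop :=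
  ∀ p₁ a₁ p₂ a₂ q b d₁ d₂, δ (p₁, a₁) = (q, b, d₁) → δ (p₂, a₂) = (q, b, d₂) →
    (p₁, a₁) = (p₂, a₂)

/-- Apply the brick gate occupying cells `(l, l+1)` to an extended configuration
whose head lies in that brick: the brick datum carried by the two cells is fed to
the brick function, and the result is written back (all other cells unchanged).
(On the impossible no-head output the configuration is returned unchanged.) -/
noncomputable def applyBrickC (δ : Q × Γ → Q × Γ × Dir) (Qp : Set Q) {N : ℕ}
    (l : ZMod N) (ec : QStar Q × ZMod N × (ZMod N → Γ)) :
    QStar Q × ZMod N × (ZMod N → Γ) :=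
  let inb : BrickD Q Γ :=
    if ec.2.1 = l then lH ec.1 (ec.2.2 l) (ec.2.2 (l + 1))
    else rH (ec.2.2 l) ec.1 (ec.2.2 (l + 1))
  match brickF δ Qp inb with
  | Sum.inl (q, a, c) =>
      (q, l, Function.update (Function.update ec.2.2 l a) (l + 1) c)
  | Sum.inr (Sum.inl (c, q, a)) =>
      (q, l + 1, Function.update (Function.update ec.2.2 l c) (l + 1) a)
  | Sum.inr (Sum.inr _) => ec

/-- The row-0 map: the bricks of row 0 are the cell pairs `(2j, 2j+1)`, so the brick
containing the scanned cell `i` starts at `i` if `i` is even and at `i - 1` otherwise. -/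
noncomputable def row0 (δ : Q × Γ → Q × Γ × Dir) (Qp : Set Q) {N : ℕ}
    (ec : QStar Q × ZMod N × (ZMod N → Γ)) : QStar Q × ZMod N × (ZMod N → Γ) :=
  applyBrickC δ Qp (if (ec.2.1).val % 2 = 0 then ec.2.1 else ec.2.1 - 1) ec

/-- The row-1 map: the bricks of row 1 are the cell pairs `(2j+1, 2j+2)`, so the brick
containing the scanned cell `i` starts at `i` if `i` is odd and at `i - 1` otherwise. -/
noncomputable def row1 (δ : Q × Γ → Q × Γ × Dir) (Qp : Set Q) {N : ℕ}
    (ec : QStar Q × ZMod N × (ZMod N → Γ)) : QStar Q × ZMod N × (ZMod N → Γ) :=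
  applyBrickC δ Qp (if (ec.2.1).val % 2 = 1 then ec.2.1 else ec.2.1 - 1) ec


section AuxLemmas
variable {Q Γ : Type*}

open Classical in
lemma brickF_lH_pl (δ : Q × Γ → Q × Γ × Dir) (Qp : Set Q) (p : Q) (a c : Γ) :
    brickF δ Qp (lH (pl p) a c) =
      if ((δ (p, a)).2.2 : ℤ) = 1 then rH (δ (p, a)).2.1 (up (δ (p, a)).1) c
      else lH (dn (δ (p, a)).1) (δ (p, a)).2.1 c := rfl

open Classical in
lemma brickF_rH_pl (δ : Q × Γ → Q × Γ × Dir) (Qp : Set Q) (c : Γ) (p : Q) (a : Γ) :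
    brickF δ Qp (rH c (pl p) a) =
      if ((δ (p, a)).2.2 : ℤ) = 1 then rH c (dn (δ (p, a)).1) (δ (p, a)).2.1
      else lH (up (δ (p, a)).1) c (δ (p, a)).2.1 := rfl

open Classical in
lemma brickF_lH_up (δ : Q × Γ → Q × Γ × Dir) (Qp : Set Q) (q : Q) (c b : Γ) :
    brickF δ Qp (lH (up q) c b) =
      if q ∈ Qp then lH (pl q) c b else rH b (up q) c := rfl

open Classical in
lemma brickF_rH_up (δ : Q × Γ → Q × Γ × Dir) (Qp : Set Q) (b : Γ) (q : Q) (c : Γ) :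
    brickF δ Qp (rH b (up q) c) =
      if q ∈ Qp then lH (up q) c b else rH b (pl q) c := rfl

open Classical in
lemma brickF_lH_dn (δ : Q × Γ → Q × Γ × Dir) (Qp : Set Q) (q : Q) (b c : Γ) :
    brickF δ Qp (lH (dn q) b c) =
      if q ∈ Qp then rH b (pl q) c else rH c (dn q) b := rfl

open Classical in
lemma brickF_rH_dn (δ : Q × Γ → Q × Γ × Dir) (Qp : Set Q) (c : Γ) (q : Q) (b : Γ) :
    brickF δ Qp (rH c (dn q) b) =
      if q ∈ Qp then lH (dn q) b c else lH (pl q) c b := rfl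

lemma upd_same2 {α β : Type*} [DecidableEq α] (f : α → β) (x y : α) (v : β) (h : y ≠ x) :
    Function.update (Function.update f x v) y (f y) = Function.update f x v := by
  conv_lhs => rw [← Function.update_of_ne h v f]
  exact Function.update_eq_self _ _

end AuxLemmas

/-- Let `N` be even, `N ≥ 4`. For every configuration `(p, i, X)` of the looped-tape
machine with `δ(p, X(i)) = (q, b, d)`, the two staggered rows of brick gates transform
the configuration into its successor: `R₁(R₀(p, i, X)) = (q, i + d, X[i ↦ b])`. -/
theorem stmt_8 {Q Γ : Type*} [Fintype Q] [Fintype Γ] [Nonempty Q] [Nonempty Γ]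
    (Qm Qp : Set Q) (hdisj : Disjoint Qm Qp) (hun : Qm ∪ Qp = Set.univ)
    (δ : Q × Γ → Q × Γ × Dir) (hsep : SepT δ Qm Qp)
    (N : ℕ) (hN : 4 ≤ N) (hNeven : Even N)
    (p : Q) (i : ZMod N) (X : ZMod N → Γ) (q : Q) (b : Γ) (d : Dir)
    (hδ : δ (p, X i) = (q, b, d)) :
    row1 δ Qp (row0 δ Qp (pl p, i, X)) =
      (pl q, i + ((d : ℤ) : ZMod N), Function.update X i b) := by
  haveI : NeZero N := ⟨by omega⟩
  haveI : Fact (1 < N) := ⟨by omega⟩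
  have h2N : (2 : ℕ) ∣ N := hNeven.two_dvd
  have h10 : (1 : ZMod N) ≠ 0 := one_ne_zero
  have h20 : (2 : ZMod N) ≠ 0 := by
    intro h
    have h2 : (N : ℕ) ∣ 2 := by
      have : ((2 : ℕ) : ZMod N) = 0 := by exact_mod_cast h
      exact (ZMod.natCast_eq_zero_iff 2 N).mp this
    have := Nat.le_of_dvd (by norm_num) h2
    omega
  have hsub : ∀ j : ZMod N, j - 1 + 1 = j := fun j => by ring
  have hne1 : ∀ j : ZMod N, j + 1 ≠ j := by
    intro j h; exact h10 (by linear_combination h)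
  have hnem : ∀ j : ZMod N, j - 1 ≠ j := by
    intro j h; exact h10 (by linear_combination -h)
  have hne2 : ∀ j : ZMod N, j - 1 - 1 ≠ j := by
    intro j h; exact h20 (by linear_combination -h)
  have hni : ∀ j : ZMod N, j ≠ j - 1 := fun j h => hnem j h.symm
  have hval : ∀ j : ZMod N, (j + 1).val % 2 = (j.val + 1) % 2 := by
    intro j
    rw [ZMod.val_add, ZMod.val_one, Nat.mod_mod_of_dvd _ h2N]
  have hvalm : ∀ j : ZMod N, (j - 1).val % 2 = (j.val + 1) % 2 := by
    intro j
    have := hval (j - 1)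
    rw [hsub] at this
    omega
  obtain ⟨hqp, hqm⟩ := hsep p (X i) q b d hδ
  obtain ⟨dv, hdv⟩ := d
  have hd : dv = -1 ∨ dv = 1 := by simpa using hdv
  rcases hd with rfl | rfl
  · -- d = -1
    have hq : q ∉ Qp := by
      intro h
      have := hqp h
      norm_num at this
    rcases Nat.mod_two_eq_zero_or_one i.val with hi | hi
    · -- i even, head at left of row0 brick (i, i+1), moving left
      have hr0 : row0 δ Qp (pl p, i, X) = (dn q, i, Function.update X i b) := by
        simp only [row0, applyBrickC]
        rw [if_pos hi, if_pos rfl, brickF_lH_pl, hδ, if_neg (by norm_num)]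
        simp only [lH]
        rw [upd_same2 X i (i + 1) b (hne1 i)]
      rw [hr0]
      have hio : ¬ i.val % 2 = 1 := by omega
      simp only [row1, applyBrickC]
      rw [if_neg hio, if_neg (hni i), brickF_rH_dn, if_neg hq]
      simp only [lH, Function.update_eq_self]
      norm_num [sub_eq_add_neg]
    · -- i odd, head at right of row0 brick (i-1, i), moving left
      have hio : ¬ i.val % 2 = 0 := by omega
      have hr0 : row0 δ Qp (pl p, i, X) = (up q, i - 1, Function.update X i b) := by
        simp only [row0, applyBrickC]
        rw [if_neg hio, if_neg (hni i), brickF_rH_pl, hsub, hδ, if_neg (by norm_num)]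
        simp only [lH, Function.update_eq_self, hsub]
      rw [hr0]
      have hio2 : ¬ (i - 1).val % 2 = 1 := by have := hvalm i; omega
      simp only [row1, applyBrickC]
      rw [if_neg hio2, if_neg (hni (i - 1)), brickF_rH_up, if_neg hq]
      simp only [rH, Function.update_eq_self, hsub]
      norm_num [sub_eq_add_neg]
  · -- d = 1
    have hq : q ∈ Qp := by
      have hmem : q ∈ Qm ∪ Qp := hun ▸ Set.mem_univ q
      rcases hmem with h | h
      · have := hqm h; norm_num at this
      · exact h
    rcases Nat.mod_two_eq_zero_or_one i.val with hi | hi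
    · -- i even, head at left of row0 brick (i, i+1)
      have hr0 : row0 δ Qp (pl p, i, X) = (up q, i + 1, Function.update X i b) := by
        simp only [row0, applyBrickC, hi, if_true, if_pos rfl, brickF_lH_pl, hδ]
        simp only [rH]
        rw [upd_same2 X i (i + 1) b (hne1 i)]
      rw [hr0]
      have hpar : (i + 1).val % 2 = 1 := by have := hval i; omega
      simp only [row1, applyBrickC]
      rw [if_pos hpar, if_pos rfl, brickF_lH_up, if_pos hq]
      simp only [lH, Function.update_eq_self]
      norm_num
    · -- i odd, head at right of row0 brick (i-1, i), moving right
      have hio : ¬ i.val % 2 = 0 := by omega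
      have hr0 : row0 δ Qp (pl p, i, X) = (dn q, i, Function.update X i b) := by
        simp only [row0, applyBrickC]
        rw [if_neg hio, if_neg (hni i), brickF_rH_pl, hsub, hδ, if_pos rfl]
        simp only [rH, Function.update_eq_self, hsub]
      rw [hr0]
      simp only [row1, applyBrickC]
      rw [if_pos hi, if_pos rfl, brickF_lH_dn, if_pos hq]
      simp only [rH, Function.update_eq_self]
      norm_num
end

section
/- If the transition operator U_M of the looped quantum Turing machine is unitary, then δ has the unit length property: for all p ∈ Q and a ∈ Γ, ‖δ_{pa}‖ = 1. -/
/-- View a tuple of complex numbers as a vector of the corresponding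
Euclidean (Hilbert) space. -/
noncomputable def toEuc {ι : Type*} (g : ι → ℂ) : EuclideanSpace ℂ ι := WithLp.toLp 2 g

variable {Q Γ : Type*}

/-- Classical configurations `(p, i, X)` of the looped machine with `N` tape cells. -/
abbrev Conf (Q Γ : Type*) (N : ℕ) : Type _ := Q × ZMod N × (ZMod N → Γ)

/-- The transition operator `U_M` of the looped quantum Turing machine, defined on the
basis vector `|p,i,X⟩` by `U_M|p,i,X⟩ = Σ_{(q,b,d)} δ_{p,X(i)}(q,b,d) |q, i+d, X[i↦b]⟩`. -/
noncomputable def UM [Fintype Q] [Fintype Γ] [DecidableEq Q] [DecidableEq Γ]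
    (N : ℕ) [NeZero N] (δ : Q × Γ → Q × Γ × Dir → ℂ) :
    EuclideanSpace ℂ (Conf Q Γ N) →ₗ[ℂ] EuclideanSpace ℂ (Conf Q Γ N) :=
  (PiLp.basisFun 2 ℂ (Conf Q Γ N)).constr ℂ fun c =>
    ∑ t : Q × Γ × Dir, δ (c.1, c.2.2 c.2.1) t •
      EuclideanSpace.single (t.1, c.2.1 + ((t.2.2 : ℤ) : ZMod N),
        Function.update c.2.2 c.2.1 t.2.1) (1 : ℂ)

/-- A linear operator on a finite-dimensional Hilbert space is unitary iff it is
surjective and preserves the inner product. -/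
def IsUnitaryOp {ι : Type*} [Fintype ι]
    (U : EuclideanSpace ℂ ι →ₗ[ℂ] EuclideanSpace ℂ ι) : Prop :=
  Function.Surjective U ∧ ∀ x y, (inner ℂ (U x) (U y) : ℂ) = inner ℂ x y

/-- If the transition operator `U_M` of the looped quantum Turing machine is unitary,
then `δ` has the unit length property: `‖δ_{pa}‖ = 1` for all `p ∈ Q`, `a ∈ Γ`. -/
theorem stmt_9 {Q Γ : Type*} [Fintype Q] [Fintype Γ] [DecidableEq Q] [DecidableEq Γ]
    [Nonempty Q] [Nonempty Γ] (N : ℕ) [NeZero N] (hN : 3 ≤ N)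
    (δ : Q × Γ → Q × Γ × Dir → ℂ) (hU : IsUnitaryOp (UM N δ)) :
    ∀ (p : Q) (a : Γ), ‖toEuc (δ (p, a))‖ = 1 := by
  intro p a
  -- the configuration (p, 0, const a)
  set c : Conf Q Γ N := (p, 0, fun _ => a) with hc
  set f : Q × Γ × Dir → Conf Q Γ N := fun t =>
    (t.1, c.2.1 + ((t.2.2 : ℤ) : ZMod N), Function.update c.2.2 c.2.1 t.2.1) with hf
  have hfinj : Function.Injective f := by
    rintro ⟨q, b, d⟩ ⟨q', b', d'⟩ h
    simp only [hf, Prod.mk.injEq] at h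
    obtain ⟨h1, h2, h3⟩ := h
    have hb : b = b' := by
      have := congrFun h3 c.2.1
      simpa [Function.update] using this
    have hd : d = d' := by
      have h2' : ((d : ℤ) : ZMod N) = ((d' : ℤ) : ZMod N) := by
        exact add_left_cancel h2
      have hdm : (d : ℤ) = -1 ∨ (d : ℤ) = 1 :=
        (Finset.mem_insert.mp d.2).imp id Finset.mem_singleton.mp
      have hdm' : (d' : ℤ) = -1 ∨ (d' : ℤ) = 1 :=
        (Finset.mem_insert.mp d'.2).imp id Finset.mem_singleton.mp
      have hne : ((1 : ℤ) : ZMod N) ≠ ((-1 : ℤ) : ZMod N) := by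
        intro h
        have h2 : ((2 : ℤ) : ZMod N) = 0 := by push_cast at h ⊢; linear_combination h
        rw [ZMod.intCast_zmod_eq_zero_iff_dvd] at h2
        have := Int.le_of_dvd (by norm_num) h2
        omega
      apply Subtype.ext
      rcases hdm with h4 | h4 <;> rcases hdm' with h5 | h5
      · rw [h4, h5]
      · exact absurd (by rw [h4, h5] at h2'; exact h2'.symm) hne
      · exact absurd (by rw [h4, h5] at h2'; exact h2') hne
      · rw [h4, h5]
    exact Prod.ext h1 (Prod.ext hb hd)
  have horth : Orthonormal ℂ fun t => EuclideanSpace.single (𝕜 := ℂ) (f t) (1 : ℂ) :=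
    (EuclideanSpace.orthonormal_single (𝕜 := ℂ) (ι := Conf Q Γ N)).comp f hfinj
  have hbasis : (PiLp.basisFun 2 ℂ (Conf Q Γ N)) c
      = EuclideanSpace.single c (1 : ℂ) := by
    rw [PiLp.basisFun_apply]
  have hUc : UM N δ (EuclideanSpace.single c (1 : ℂ)) =
      ∑ t : Q × Γ × Dir, δ (p, a) t • EuclideanSpace.single (f t) (1 : ℂ) := by
    rw [← hbasis, UM, Module.Basis.constr_basis]
  have key := hU.2 (EuclideanSpace.single c (1 : ℂ)) (EuclideanSpace.single c (1 : ℂ))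
  rw [hUc] at key
  have hrhs : (inner ℂ (EuclideanSpace.single c (1 : ℂ)) (EuclideanSpace.single c (1 : ℂ)) : ℂ)
      = 1 := by
    rw [EuclideanSpace.inner_single_left]
    simp
  rw [hrhs] at key
  have hlhs : (inner ℂ (∑ t : Q × Γ × Dir, δ (p, a) t • EuclideanSpace.single (𝕜 := ℂ) (f t) (1 : ℂ))
      (∑ t : Q × Γ × Dir, δ (p, a) t • EuclideanSpace.single (𝕜 := ℂ) (f t) (1 : ℂ)) : ℂ)
      = ∑ t : Q × Γ × Dir, (starRingEnd ℂ) (δ (p, a) t) * δ (p, a) t := by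
    rw [sum_inner]
    simp_rw [inner_sum, inner_smul_left, inner_smul_right, orthonormal_iff_ite.mp horth]
    simp [Finset.mul_sum, mul_ite]
  rw [hlhs] at key
  have hsum : ∑ t : Q × Γ × Dir, ‖δ (p, a) t‖ ^ 2 = 1 := by
    have : ((∑ t : Q × Γ × Dir, ‖δ (p, a) t‖ ^ 2 : ℝ) : ℂ) = 1 := by
      push_cast
      rw [← key]
      congr 1; ext t
      rw [RCLike.conj_mul]
      norm_cast
    exact_mod_cast this
  rw [EuclideanSpace.norm_eq]
  have : ∑ i : Q × Γ × Dir, ‖toEuc (δ (p, a)) i‖ ^ 2 = 1 := hsum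
  rw [this, Real.sqrt_one]
end

section
/- If the transition operator U_M of the looped quantum Turing machine is unitary, then δ has the orthogonality property: for all (p₁,a₁) ≠ (p₂,a₂) in Q × Γ, the inner product ⟪δ_{p₁a₁}, δ_{p₂a₂}⟫ = 0. -/
variable {Q Γ : Type*}

lemma dir_cast_inj {N : ℕ} (hN : 3 ≤ N) (d e : Dir)
    (h : ((d : ℤ) : ZMod N) = ((e : ℤ) : ZMod N)) : d = e := by
  have h2 : ((2 : ℕ) : ZMod N) ≠ 0 := by
    rw [Ne, ZMod.natCast_eq_zero_iff]
    intro hdvd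
    have := Nat.le_of_dvd (by norm_num) hdvd
    omega
  have hd := d.2; have he := e.2
  simp only [Finset.mem_insert, Finset.mem_singleton] at hd he
  apply Subtype.ext
  rcases hd with hd | hd <;> rcases he with he | he
  · exact hd.trans he.symm
  · exfalso; apply h2; rw [hd, he] at h; push_cast at h ⊢; linear_combination -h
  · exfalso; apply h2; rw [hd, he] at h; push_cast at h ⊢; linear_combination h
  · exact hd.trans he.symm

lemma UM_single {Q Γ : Type*} [Fintype Q] [Fintype Γ] [DecidableEq Q] [DecidableEq Γ]
    (N : ℕ) [NeZero N] (δ : Q × Γ → Q × Γ × Dir → ℂ) (c : Conf Q Γ N) :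
    UM N δ (EuclideanSpace.single c 1) =
      ∑ t : Q × Γ × Dir, δ (c.1, c.2.2 c.2.1) t •
        EuclideanSpace.single (t.1, c.2.1 + ((t.2.2 : ℤ) : ZMod N),
          Function.update c.2.2 c.2.1 t.2.1) (1 : ℂ) := by
  have h : EuclideanSpace.single c (1:ℂ) = (PiLp.basisFun 2 ℂ (Conf Q Γ N)) c := by
    ext j
    simp [PiLp.basisFun_apply, EuclideanSpace.single_apply, Pi.single_apply]
  rw [h, UM, Module.Basis.constr_basis]

/-- If the transition operator `U_M` of the looped quantum Turing machine is unitary,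
then `δ` has the orthogonality property: `⟪δ_{p₁a₁}, δ_{p₂a₂}⟫ = 0` whenever
`(p₁,a₁) ≠ (p₂,a₂)`. -/
theorem stmt_10 {Q Γ : Type*} [Fintype Q] [Fintype Γ] [DecidableEq Q] [DecidableEq Γ]
    [Nonempty Q] [Nonempty Γ] (N : ℕ) [NeZero N] (hN : 3 ≤ N)
    (δ : Q × Γ → Q × Γ × Dir → ℂ) (hU : IsUnitaryOp (UM N δ)) :
    ∀ (p₁ : Q) (a₁ : Γ) (p₂ : Q) (a₂ : Γ), (p₁, a₁) ≠ (p₂, a₂) →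
      (inner ℂ (toEuc (δ (p₁, a₁))) (toEuc (δ (p₂, a₂))) : ℂ) = 0 := by
  intro p₁ a₁ p₂ a₂ hne
  obtain ⟨x0⟩ := (inferInstance : Nonempty Γ)
  let X : ZMod N → Γ := fun _ => x0
  have hc : ((p₁, 0, Function.update X 0 a₁) : Conf Q Γ N)
      ≠ (p₂, 0, Function.update X 0 a₂) := by
    intro h
    apply hne
    have h1 : p₁ = p₂ := congrArg (fun c : Conf Q Γ N => c.1) h
    have h2 : Function.update X 0 a₁ = Function.update X 0 a₂ :=
      congrArg (fun c : Conf Q Γ N => c.2.2) h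
    have h3 : a₁ = a₂ := by simpa using congrFun h2 0
    rw [h1, h3]
  have h0 := hU.2 (EuclideanSpace.single (p₁, 0, Function.update X 0 a₁) 1)
    (EuclideanSpace.single (p₂, 0, Function.update X 0 a₂) 1)
  rw [UM_single, UM_single, EuclideanSpace.inner_single_left,
    EuclideanSpace.single_apply, sum_inner] at h0
  simp only [inner_sum, inner_smul_left, inner_smul_right, EuclideanSpace.inner_single_left,
    EuclideanSpace.single_apply, map_one, one_mul, mul_one, Function.update_self] at h0
  rw [if_neg hc] at h0
  have hcond : ∀ x y : Q × Γ × Dir,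
      (((x.1, (0:ZMod N) + ((x.2.2:ℤ):ZMod N),
          Function.update (Function.update X 0 a₁) 0 x.2.1) : Conf Q Γ N) =
       (y.1, (0:ZMod N) + ((y.2.2:ℤ):ZMod N),
          Function.update (Function.update X 0 a₂) 0 y.2.1))
      ↔ x = y := by
    intro x y
    simp only [Function.update_idem]
    constructor
    · intro h
      have h1 : x.1 = y.1 := congrArg (fun c : Conf Q Γ N => c.1) h
      have h2 : (0:ZMod N) + ((x.2.2:ℤ):ZMod N) = 0 + ((y.2.2:ℤ):ZMod N) :=
        congrArg (fun c : Conf Q Γ N => c.2.1) h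
      have h3 : Function.update X 0 x.2.1 = Function.update X 0 y.2.1 :=
        congrArg (fun c : Conf Q Γ N => c.2.2) h
      rw [add_right_inj] at h2
      have hd : x.2.2 = y.2.2 := dir_cast_inj hN _ _ h2
      have hb : x.2.1 = y.2.1 := by simpa using congrFun h3 0
      exact Prod.ext h1 (Prod.ext hb hd)
    · rintro rfl; rfl
  simp only [hcond, mul_ite, mul_one, mul_zero, ite_mul, zero_mul, Finset.sum_ite_eq,
    Finset.mem_univ, if_true] at h0
  calc (inner ℂ (toEuc (δ (p₁, a₁))) (toEuc (δ (p₂, a₂))) : ℂ)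
      = ∑ x : Q × Γ × Dir, (starRingEnd ℂ) (δ (p₁, a₁) x) * δ (p₂, a₂) x := by
        simp [toEuc, PiLp.inner_apply]
        exact Finset.sum_congr rfl fun x _ => mul_comm _ _
    _ = 0 := by
        rw [← h0]
        exact Finset.sum_congr rfl fun x _ => mul_comm _ _
end

section
/- There is a unique linear operator U on BRICK satisfying equations (u0), (u1), (u2), (u2'), (u3), (u3'), and this operator U is unitary. -/
variable {Q Γ : Type*}

/-- The vector `L_{pab} = Σ_q δ_{pa}(q, b, -1)|q⟩` in `ℂ^Q`. -/
noncomputable def Lvec (δ : Q × Γ → Q × Γ × Dir → ℂ) (p : Q) (a b : Γ) :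
    EuclideanSpace ℂ Q := toEuc fun q => δ (p, a) (q, b, dMinus)

/-- The vector `R_{pab} = Σ_q δ_{pa}(q, b, +1)|q⟩` in `ℂ^Q`. -/
noncomputable def Rvec (δ : Q × Γ → Q × Γ × Dir → ℂ) (p : Q) (a b : Γ) :
    EuclideanSpace ℂ Q := toEuc fun q => δ (p, a) (q, b, dPlus)

/-- `L`: the span of the vectors `L_{pab}` in `ℂ^Q`. -/
noncomputable def Lspan (δ : Q × Γ → Q × Γ × Dir → ℂ) :
    Submodule ℂ (EuclideanSpace ℂ Q) :=
  Submodule.span ℂ {v | ∃ p a b, v = Lvec δ p a b}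

/-- `R`: the span of the vectors `R_{pab}` in `ℂ^Q`. -/
noncomputable def Rspan (δ : Q × Γ → Q × Γ × Dir → ℂ) :
    Submodule ℂ (EuclideanSpace ℂ Q) :=
  Submodule.span ℂ {v | ∃ p a b, v = Rvec δ p a b}

/-- The basis vector of `BRICK` indexed by a brick datum. -/
noncomputable def bvec [DecidableEq Q] [DecidableEq Γ] (x : BrickD Q Γ) :
    EuclideanSpace ℂ (BrickD Q Γ) :=
  haveI : DecidableEq (BrickD Q Γ) := instDecidableEqSum; EuclideanSpace.single x 1

/-- `|v^ι, a, 0, c⟩ = Σ_q v_q |ι(q), a, 0, c⟩`: a vector `v ∈ ℂ^Q`, annotated by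
`ι ∈ {pl, up, dn}`, placed in the left cell of a brick. -/
noncomputable def embL [Fintype Q] [DecidableEq Q] [DecidableEq Γ] (ι : Q → QStar Q)
    (v : EuclideanSpace ℂ Q) (a c : Γ) : EuclideanSpace ℂ (BrickD Q Γ) :=
  ∑ q, v q • bvec (lH (ι q) a c)

/-- `|0, c, v^ι, a⟩ = Σ_q v_q |0, c, ι(q), a⟩`: a vector `v ∈ ℂ^Q`, annotated by
`ι ∈ {pl, up, dn}`, placed in the right cell of a brick. -/
noncomputable def embR [Fintype Q] [DecidableEq Q] [DecidableEq Γ] (ι : Q → QStar Q)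
    (v : EuclideanSpace ℂ Q) (c a : Γ) : EuclideanSpace ℂ (BrickD Q Γ) :=
  ∑ q, v q • bvec (rH c (ι q) a)

/-- The equations (u0), (u1), (u2), (u2'), (u3), (u3') for a linear operator `U`
on `BRICK`. -/
def Eqns [Fintype Q] [DecidableEq Q] [DecidableEq Γ] [Fintype Γ]
    (δ : Q × Γ → Q × Γ × Dir → ℂ)
    (U : EuclideanSpace ℂ (BrickD Q Γ) →ₗ[ℂ] EuclideanSpace ℂ (BrickD Q Γ)) : Prop :=
  -- (u0)
  (∀ a b : Γ, U (bvec (nH a b)) = bvec (nH a b)) ∧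
  -- (u1)
  (∀ (p : Q) (a c : Γ), U (bvec (rH c (pl p) a)) =
      ∑ b, (embL up (Lvec δ p a b) c b + embR dn (Rvec δ p a b) c b)) ∧
  (∀ (p : Q) (a c : Γ), U (bvec (lH (pl p) a c)) =
      ∑ b, (embR up (Rvec δ p a b) b c + embL dn (Lvec δ p a b) b c)) ∧
  -- (u2)
  (∀ v ∈ Lspan δ, ∀ c d : Γ, U (embR up v d c) = embR pl v d c) ∧
  (∀ v ∈ Rspan δ, ∀ c d : Γ, U (embL up v c d) = embL pl v c d) ∧
  -- (u2')
  (∀ v ∈ (Lspan δ)ᗮ, ∀ c d : Γ, U (embR up v d c) = embL up v c d) ∧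
  (∀ v ∈ (Rspan δ)ᗮ, ∀ c d : Γ, U (embL up v c d) = embR up v c d) ∧
  -- (u3)
  (∀ v ∈ Lspan δ, ∀ c d : Γ, U (embR dn v d c) = embL pl v c d) ∧
  (∀ v ∈ Rspan δ, ∀ c d : Γ, U (embL dn v c d) = embR pl v d c) ∧
  -- (u3')
  (∀ v ∈ (Lspan δ)ᗮ, ∀ c d : Γ, U (embR dn v d c) = embL dn v c d) ∧
  (∀ v ∈ (Rspan δ)ᗮ, ∀ c d : Γ, U (embL dn v c d) = embR dn v c d)

instance instDecEqBrickD {Q Γ : Type*} [DecidableEq Q] [DecidableEq Γ] :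
    DecidableEq (BrickD Q Γ) := instDecidableEqSum

section Aux
set_option linter.unusedSectionVars false

variable {Q Γ : Type*} [Fintype Q] [Fintype Γ] [DecidableEq Q] [DecidableEq Γ]

/-- basis vector of `ℂ^Q` -/
noncomputable def eQ (q : Q) : EuclideanSpace ℂ Q := EuclideanSpace.single q 1

lemma euc_sum_single (v : EuclideanSpace ℂ Q) : ∑ q, v q • eQ q = v := by
  simpa [eQ, EuclideanSpace.basisFun_apply, EuclideanSpace.basisFun_repr] using
    (EuclideanSpace.basisFun Q ℂ).sum_repr v

lemma lin_sum_single {M : Type*} [AddCommGroup M] [Module ℂ M]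
    (T : EuclideanSpace ℂ Q →ₗ[ℂ] M) (v : EuclideanSpace ℂ Q) :
    ∑ q, v q • T (eQ q) = T v := by
  conv_rhs => rw [← euc_sum_single v]
  rw [map_sum]
  simp

/-- `embL` as a linear map -/
noncomputable def embLl (ι : Q → QStar Q) (a c : Γ) :
    EuclideanSpace ℂ Q →ₗ[ℂ] EuclideanSpace ℂ (BrickD Q Γ) where
  toFun v := embL ι v a c
  map_add' v w := by
    simp [embL, PiLp.add_apply, add_smul, Finset.sum_add_distrib]
  map_smul' r v := by
    simp [embL, PiLp.smul_apply, smul_smul, Finset.smul_sum]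

noncomputable def embRl (ι : Q → QStar Q) (c a : Γ) :
    EuclideanSpace ℂ Q →ₗ[ℂ] EuclideanSpace ℂ (BrickD Q Γ) where
  toFun v := embR ι v c a
  map_add' v w := by
    simp [embR, PiLp.add_apply, add_smul, Finset.sum_add_distrib]
  map_smul' r v := by
    simp [embR, PiLp.smul_apply, smul_smul, Finset.smul_sum]

@[simp] lemma embLl_apply (ι : Q → QStar Q) (a c : Γ) (v) : embLl ι a c v = embL ι v a c := rfl
@[simp] lemma embRl_apply (ι : Q → QStar Q) (c a : Γ) (v) : embRl ι c a v = embR ι v c a := rfl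

lemma embL_single (ι : Q → QStar Q) (q : Q) (a c : Γ) :
    embL ι (eQ q) a c = bvec (lH (ι q) a c) := by
  simp [embL, eQ, EuclideanSpace.single_apply, ite_smul]

lemma embR_single (ι : Q → QStar Q) (q : Q) (c a : Γ) :
    embR ι (eQ q) c a = bvec (rH c (ι q) a) := by
  simp [embR, eQ, EuclideanSpace.single_apply, ite_smul]

end Aux
section Aux2
set_option linter.unusedSectionVars false
variable {Q Γ : Type*} [Fintype Q] [Fintype Γ] [DecidableEq Q] [DecidableEq Γ]

local notation "⟪" x ", " y "⟫" => @inner ℂ _ _ x y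

lemma inner_emb_emb (f g : Q → BrickD Q Γ) (v w : EuclideanSpace ℂ Q) :
    ⟪∑ q, v q • bvec (f q), ∑ q, w q • bvec (g q)⟫
      = ∑ q, ∑ q', (starRingEnd ℂ) (v q) * w q' * (if f q = g q' then 1 else 0) := by
  rw [sum_inner]
  refine Finset.sum_congr rfl fun q _ => ?_
  rw [inner_sum]
  refine Finset.sum_congr rfl fun q' _ => ?_
  rw [inner_smul_left, inner_smul_right, bvec, bvec, EuclideanSpace.inner_single_left,
    EuclideanSpace.single_apply]
  simp [mul_assoc]

lemma inner_emb_cond (f g : Q → BrickD Q Γ) (P : Prop) [Decidable P]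
    (h : ∀ q q', f q = g q' ↔ (q = q' ∧ P)) (v w : EuclideanSpace ℂ Q) :
    ⟪∑ q, v q • bvec (f q), ∑ q, w q • bvec (g q)⟫ = if P then ⟪v, w⟫ else 0 := by
  rw [inner_emb_emb]
  by_cases hP : P
  · simp only [h, hP, and_true, mul_ite, mul_one, mul_zero, if_pos]
    rw [PiLp.inner_apply]
    refine Finset.sum_congr rfl fun q _ => ?_
    · rw [Finset.sum_ite_eq Finset.univ q (fun q' => (starRingEnd ℂ) (v q) * w q')]
      simp [RCLike.inner_apply, mul_comm]
  · simp [h, hP]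

lemma inner_emb_ne (f g : Q → BrickD Q Γ) (h : ∀ q q', f q ≠ g q') (v w : EuclideanSpace ℂ Q) :
    ⟪∑ q, v q • bvec (f q), ∑ q, w q • bvec (g q)⟫ = 0 := by
  rw [inner_emb_emb]; simp [h]

end Aux2
section Aux3
set_option linter.unusedSectionVars false
variable {Q Γ : Type*} [Fintype Q] [Fintype Γ] [DecidableEq Q] [DecidableEq Γ]

local notation "⟪" x ", " y "⟫" => @inner ℂ _ _ x y

@[simp] lemma inner_bvec_bvec (x y : BrickD Q Γ) : ⟪bvec x, bvec y⟫ = if x = y then (1:ℂ) else 0 := by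
  rw [bvec, bvec, EuclideanSpace.inner_single_left, EuclideanSpace.single_apply]
  simp [eq_comm]

@[simp] lemma inner_nH_embL (a b : Γ) (ι : Q → QStar Q) (v : EuclideanSpace ℂ Q) (a' c' : Γ) :
    ⟪bvec (nH a b), embL ι v a' c'⟫ = 0 := by
  simp only [embL]; rw [inner_sum]; simp only [inner_smul_right, inner_bvec_bvec]
  simp [nH, lH]

@[simp] lemma inner_embL_nH (a b : Γ) (ι : Q → QStar Q) (v : EuclideanSpace ℂ Q) (a' c' : Γ) :
    ⟪embL ι v a' c', bvec (nH a b)⟫ = 0 := by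
  simp only [embL]; rw [sum_inner]; simp only [inner_smul_left, inner_bvec_bvec]
  simp [nH, lH]

@[simp] lemma inner_nH_embR (a b : Γ) (ι : Q → QStar Q) (v : EuclideanSpace ℂ Q) (c' a' : Γ) :
    ⟪bvec (nH a b), embR ι v c' a'⟫ = 0 := by
  simp only [embR]; rw [inner_sum]; simp only [inner_smul_right, inner_bvec_bvec]
  simp [nH, rH]

@[simp] lemma inner_embR_nH (a b : Γ) (ι : Q → QStar Q) (v : EuclideanSpace ℂ Q) (c' a' : Γ) :
    ⟪embR ι v c' a', bvec (nH a b)⟫ = 0 := by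
  simp only [embR]; rw [sum_inner]; simp only [inner_smul_left, inner_bvec_bvec]
  simp [nH, rH]

@[simp] lemma inner_embL_embR (ι κ : Q → QStar Q) (v w : EuclideanSpace ℂ Q) (a c c' a' : Γ) :
    ⟪embL ι v a c, embR κ w c' a'⟫ = 0 := by
  simp only [embL, embR]
  exact inner_emb_ne _ _ (fun q q' => by simp [lH, rH]) v w

@[simp] lemma inner_embR_embL (ι κ : Q → QStar Q) (v w : EuclideanSpace ℂ Q) (c a a' c' : Γ) :
    ⟪embR ι v c a, embL κ w a' c'⟫ = 0 := by
  simp only [embL, embR]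
  exact inner_emb_ne _ _ (fun q q' => by simp [lH, rH]) v w

@[simp] lemma iLL_pp (v w : EuclideanSpace ℂ Q) (a c a' c' : Γ) :
    ⟪embL pl v a c, embL pl w a' c'⟫ = if a = a' ∧ c = c' then ⟪v, w⟫ else 0 := by
  simp only [embL]
  exact inner_emb_cond _ _ _ (fun q q' => by simp [lH, pl, Prod.ext_iff, and_assoc]) v w

@[simp] lemma iLL_uu (v w : EuclideanSpace ℂ Q) (a c a' c' : Γ) :
    ⟪embL up v a c, embL up w a' c'⟫ = if a = a' ∧ c = c' then ⟪v, w⟫ else 0 := by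
  simp only [embL]
  exact inner_emb_cond _ _ _ (fun q q' => by simp [lH, up, Prod.ext_iff, and_assoc]) v w

@[simp] lemma iLL_dd (v w : EuclideanSpace ℂ Q) (a c a' c' : Γ) :
    ⟪embL dn v a c, embL dn w a' c'⟫ = if a = a' ∧ c = c' then ⟪v, w⟫ else 0 := by
  simp only [embL]
  exact inner_emb_cond _ _ _ (fun q q' => by simp [lH, dn, Prod.ext_iff, and_assoc]) v w

@[simp] lemma iRR_pp (v w : EuclideanSpace ℂ Q) (c a c' a' : Γ) :
    ⟪embR pl v c a, embR pl w c' a'⟫ = if c = c' ∧ a = a' then ⟪v, w⟫ else 0 := by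
  simp only [embR]
  refine inner_emb_cond _ _ _ (fun q q' => ?_) v w
  simp [rH, pl, Prod.ext_iff]; tauto

@[simp] lemma iRR_uu (v w : EuclideanSpace ℂ Q) (c a c' a' : Γ) :
    ⟪embR up v c a, embR up w c' a'⟫ = if c = c' ∧ a = a' then ⟪v, w⟫ else 0 := by
  simp only [embR]
  refine inner_emb_cond _ _ _ (fun q q' => ?_) v w
  simp [rH, up, Prod.ext_iff]; tauto

@[simp] lemma iRR_dd (v w : EuclideanSpace ℂ Q) (c a c' a' : Γ) :
    ⟪embR dn v c a, embR dn w c' a'⟫ = if c = c' ∧ a = a' then ⟪v, w⟫ else 0 := by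
  simp only [embR]
  refine inner_emb_cond _ _ _ (fun q q' => ?_) v w
  simp [rH, dn, Prod.ext_iff]; tauto

@[simp] lemma iLL_pu (v w : EuclideanSpace ℂ Q) (a c a' c' : Γ) :
    ⟪embL pl v a c, embL up w a' c'⟫ = 0 := by
  simp only [embL]; exact inner_emb_ne _ _ (fun q q' => by simp [lH, pl, up, Prod.ext_iff]) v w

@[simp] lemma iLL_pd (v w : EuclideanSpace ℂ Q) (a c a' c' : Γ) :
    ⟪embL pl v a c, embL dn w a' c'⟫ = 0 := by
  simp only [embL]; exact inner_emb_ne _ _ (fun q q' => by simp [lH, pl, dn, Prod.ext_iff]) v w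

@[simp] lemma iLL_up (v w : EuclideanSpace ℂ Q) (a c a' c' : Γ) :
    ⟪embL up v a c, embL pl w a' c'⟫ = 0 := by
  simp only [embL]; exact inner_emb_ne _ _ (fun q q' => by simp [lH, pl, up, Prod.ext_iff]) v w

@[simp] lemma iLL_ud (v w : EuclideanSpace ℂ Q) (a c a' c' : Γ) :
    ⟪embL up v a c, embL dn w a' c'⟫ = 0 := by
  simp only [embL]; exact inner_emb_ne _ _ (fun q q' => by simp [lH, up, dn, Prod.ext_iff]) v w

@[simp] lemma iLL_dp (v w : EuclideanSpace ℂ Q) (a c a' c' : Γ) :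
    ⟪embL dn v a c, embL pl w a' c'⟫ = 0 := by
  simp only [embL]; exact inner_emb_ne _ _ (fun q q' => by simp [lH, pl, dn, Prod.ext_iff]) v w

@[simp] lemma iLL_du (v w : EuclideanSpace ℂ Q) (a c a' c' : Γ) :
    ⟪embL dn v a c, embL up w a' c'⟫ = 0 := by
  simp only [embL]; exact inner_emb_ne _ _ (fun q q' => by simp [lH, up, dn, Prod.ext_iff]) v w

@[simp] lemma iRR_pu (v w : EuclideanSpace ℂ Q) (c a c' a' : Γ) :
    ⟪embR pl v c a, embR up w c' a'⟫ = 0 := by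
  simp only [embR]; exact inner_emb_ne _ _ (fun q q' => by simp [rH, pl, up, Prod.ext_iff]) v w

@[simp] lemma iRR_pd (v w : EuclideanSpace ℂ Q) (c a c' a' : Γ) :
    ⟪embR pl v c a, embR dn w c' a'⟫ = 0 := by
  simp only [embR]; exact inner_emb_ne _ _ (fun q q' => by simp [rH, pl, dn, Prod.ext_iff]) v w

@[simp] lemma iRR_up (v w : EuclideanSpace ℂ Q) (c a c' a' : Γ) :
    ⟪embR up v c a, embR pl w c' a'⟫ = 0 := by
  simp only [embR]; exact inner_emb_ne _ _ (fun q q' => by simp [rH, pl, up, Prod.ext_iff]) v w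

@[simp] lemma iRR_ud (v w : EuclideanSpace ℂ Q) (c a c' a' : Γ) :
    ⟪embR up v c a, embR dn w c' a'⟫ = 0 := by
  simp only [embR]; exact inner_emb_ne _ _ (fun q q' => by simp [rH, up, dn, Prod.ext_iff]) v w

@[simp] lemma iRR_dp (v w : EuclideanSpace ℂ Q) (c a c' a' : Γ) :
    ⟪embR dn v c a, embR pl w c' a'⟫ = 0 := by
  simp only [embR]; exact inner_emb_ne _ _ (fun q q' => by simp [rH, pl, dn, Prod.ext_iff]) v w

@[simp] lemma iRR_du (v w : EuclideanSpace ℂ Q) (c a c' a' : Γ) :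
    ⟪embR dn v c a, embR up w c' a'⟫ = 0 := by
  simp only [embR]; exact inner_emb_ne _ _ (fun q q' => by simp [rH, up, dn, Prod.ext_iff]) v w

end Aux3
section Aux4
set_option linter.unusedSectionVars false
variable {Q Γ : Type*} [Fintype Q] [Fintype Γ] [DecidableEq Q] [DecidableEq Γ]

local notation "⟪" x ", " y "⟫" => @inner ℂ _ _ x y

/-- orthogonal projection onto `Lspan δ` as an endomorphism -/
noncomputable def PL (δ : Q × Γ → Q × Γ × Dir → ℂ) :
    EuclideanSpace ℂ Q →ₗ[ℂ] EuclideanSpace ℂ Q :=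
  (Lspan δ).subtype ∘ₗ (Submodule.orthogonalProjectionOnto (Lspan δ)).toLinearMap

noncomputable def PR (δ : Q × Γ → Q × Γ × Dir → ℂ) :
    EuclideanSpace ℂ Q →ₗ[ℂ] EuclideanSpace ℂ Q :=
  (Rspan δ).subtype ∘ₗ (Submodule.orthogonalProjectionOnto (Rspan δ)).toLinearMap

variable (δ : Q × Γ → Q × Γ × Dir → ℂ)

lemma PL_mem (v : EuclideanSpace ℂ Q) : PL δ v ∈ Lspan δ := (Submodule.orthogonalProjectionOnto (Lspan δ) v).2
lemma PR_mem (v : EuclideanSpace ℂ Q) : PR δ v ∈ Rspan δ := (Submodule.orthogonalProjectionOnto (Rspan δ) v).2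

lemma sub_PL_mem (v : EuclideanSpace ℂ Q) : v - PL δ v ∈ (Lspan δ)ᗮ :=
  Submodule.sub_starProjection_mem_orthogonal v

lemma sub_PR_mem (v : EuclideanSpace ℂ Q) : v - PR δ v ∈ (Rspan δ)ᗮ :=
  Submodule.sub_starProjection_mem_orthogonal v

lemma PL_of_mem {v : EuclideanSpace ℂ Q} (h : v ∈ Lspan δ) : PL δ v = v :=
  Submodule.starProjection_eq_self_iff.mpr h

lemma PR_of_mem {v : EuclideanSpace ℂ Q} (h : v ∈ Rspan δ) : PR δ v = v :=
  Submodule.starProjection_eq_self_iff.mpr h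

lemma PL_of_orth {v : EuclideanSpace ℂ Q} (h : v ∈ (Lspan δ)ᗮ) : PL δ v = 0 := by
  have := Submodule.orthogonalProjectionOnto_apply_of_mem_orthogonal h
  simp [PL, this]

lemma PR_of_orth {v : EuclideanSpace ℂ Q} (h : v ∈ (Rspan δ)ᗮ) : PR δ v = 0 := by
  have := Submodule.orthogonalProjectionOnto_apply_of_mem_orthogonal h
  simp [PR, this]

/-- The image of each basis vector of `BRICK` under the operator. -/
noncomputable def Umap : BrickD Q Γ → EuclideanSpace ℂ (BrickD Q Γ)
  | Sum.inl (Sum.inl p, a, c) => ∑ b, (embR up (Rvec δ p a b) b c + embL dn (Lvec δ p a b) b c)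
  | Sum.inl (Sum.inr (Sum.inl q), c, d) =>
      embL pl (PR δ (eQ q)) c d + embR up (eQ q - PR δ (eQ q)) c d
  | Sum.inl (Sum.inr (Sum.inr q), c, d) =>
      embR pl (PR δ (eQ q)) d c + embR dn (eQ q - PR δ (eQ q)) c d
  | Sum.inr (Sum.inl (c, Sum.inl p, a)) => ∑ b, (embL up (Lvec δ p a b) c b + embR dn (Rvec δ p a b) c b)
  | Sum.inr (Sum.inl (d, Sum.inr (Sum.inl q), c)) =>
      embR pl (PL δ (eQ q)) d c + embL up (eQ q - PL δ (eQ q)) c d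
  | Sum.inr (Sum.inl (d, Sum.inr (Sum.inr q), c)) =>
      embL pl (PL δ (eQ q)) c d + embL dn (eQ q - PL δ (eQ q)) c d
  | Sum.inr (Sum.inr (a, c)) => bvec (nH a c)

@[simp] lemma Umap_lH_pl (p : Q) (a c : Γ) :
    Umap δ (lH (pl p) a c) = ∑ b, (embR up (Rvec δ p a b) b c + embL dn (Lvec δ p a b) b c) := rfl
@[simp] lemma Umap_lH_up (q : Q) (c d : Γ) :
    Umap δ (lH (up q) c d) = embL pl (PR δ (eQ q)) c d + embR up (eQ q - PR δ (eQ q)) c d := rfl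
@[simp] lemma Umap_lH_dn (q : Q) (c d : Γ) :
    Umap δ (lH (dn q) c d) = embR pl (PR δ (eQ q)) d c + embR dn (eQ q - PR δ (eQ q)) c d := rfl
@[simp] lemma Umap_rH_pl (p : Q) (a c : Γ) :
    Umap δ (rH c (pl p) a) = ∑ b, (embL up (Lvec δ p a b) c b + embR dn (Rvec δ p a b) c b) := rfl
@[simp] lemma Umap_rH_up (q : Q) (c d : Γ) :
    Umap δ (rH d (up q) c) = embR pl (PL δ (eQ q)) d c + embL up (eQ q - PL δ (eQ q)) c d := rfl
@[simp] lemma Umap_rH_dn (q : Q) (c d : Γ) :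
    Umap δ (rH d (dn q) c) = embL pl (PL δ (eQ q)) c d + embL dn (eQ q - PL δ (eQ q)) c d := rfl
@[simp] lemma Umap_nH (a c : Γ) : Umap δ (nH a c) = bvec (nH a c) := rfl

/-- The operator `U`. -/
noncomputable def Uop : EuclideanSpace ℂ (BrickD Q Γ) →ₗ[ℂ] EuclideanSpace ℂ (BrickD Q Γ) :=
  (EuclideanSpace.basisFun (BrickD Q Γ) ℂ).toBasis.constr ℂ (Umap δ)

lemma Uop_bvec (x : BrickD Q Γ) : Uop δ (bvec x) = Umap δ x := by
  have := Module.Basis.constr_basis (EuclideanSpace.basisFun (BrickD Q Γ) ℂ).toBasis ℂ (Umap δ) x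
  simpa [bvec, EuclideanSpace.basisFun_apply, Uop] using this

lemma Uop_embL (ι : Q → QStar Q) (v : EuclideanSpace ℂ Q) (a c : Γ) :
    Uop δ (embL ι v a c) = ∑ q, v q • Umap δ (lH (ι q) a c) := by
  rw [embL, map_sum]
  exact Finset.sum_congr rfl fun q _ => by rw [map_smul, Uop_bvec]

lemma Uop_embR (ι : Q → QStar Q) (v : EuclideanSpace ℂ Q) (c a : Γ) :
    Uop δ (embR ι v c a) = ∑ q, v q • Umap δ (rH c (ι q) a) := by
  rw [embR, map_sum]
  exact Finset.sum_congr rfl fun q _ => by rw [map_smul, Uop_bvec]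

lemma Uop_embR_up (v : EuclideanSpace ℂ Q) (d c : Γ) :
    Uop δ (embR up v d c) = embR pl (PL δ v) d c + embL up (v - PL δ v) c d := by
  rw [Uop_embR]
  have h := lin_sum_single ((embRl pl d c ∘ₗ PL δ) + (embLl up c d ∘ₗ (LinearMap.id - PL δ))) v
  simpa using h

lemma Uop_embL_up (v : EuclideanSpace ℂ Q) (c d : Γ) :
    Uop δ (embL up v c d) = embL pl (PR δ v) c d + embR up (v - PR δ v) c d := by
  rw [Uop_embL]
  have h := lin_sum_single ((embLl pl c d ∘ₗ PR δ) + (embRl up c d ∘ₗ (LinearMap.id - PR δ))) v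
  simpa using h

lemma Uop_embR_dn (v : EuclideanSpace ℂ Q) (d c : Γ) :
    Uop δ (embR dn v d c) = embL pl (PL δ v) c d + embL dn (v - PL δ v) c d := by
  rw [Uop_embR]
  have h := lin_sum_single ((embLl pl c d ∘ₗ PL δ) + (embLl dn c d ∘ₗ (LinearMap.id - PL δ))) v
  simpa using h

lemma Uop_embL_dn (v : EuclideanSpace ℂ Q) (c d : Γ) :
    Uop δ (embL dn v c d) = embR pl (PR δ v) d c + embR dn (v - PR δ v) c d := by
  rw [Uop_embL]
  have h := lin_sum_single ((embRl pl d c ∘ₗ PR δ) + (embRl dn c d ∘ₗ (LinearMap.id - PR δ))) v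
  simpa using h

end Aux4
section Aux5
set_option linter.unusedSectionVars false
variable {Q Γ : Type*} [Fintype Q] [Fintype Γ] [DecidableEq Q] [DecidableEq Γ]

local notation "⟪" x ", " y "⟫" => @inner ℂ _ _ x y

@[simp] lemma embL_zero (ι : Q → QStar Q) (a c : Γ) : embL ι (0 : EuclideanSpace ℂ Q) a c = 0 := by
  simpa using (embLl ι a c).map_zero

@[simp] lemma embR_zero (ι : Q → QStar Q) (c a : Γ) : embR ι (0 : EuclideanSpace ℂ Q) c a = 0 := by
  simpa using (embRl ι c a).map_zero

lemma embL_add (ι : Q → QStar Q) (v w : EuclideanSpace ℂ Q) (a c : Γ) :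
    embL ι (v + w) a c = embL ι v a c + embL ι w a c := by
  simpa using (embLl ι a c).map_add v w

lemma embR_add (ι : Q → QStar Q) (v w : EuclideanSpace ℂ Q) (c a : Γ) :
    embR ι (v + w) c a = embR ι v c a + embR ι w c a := by
  simpa using (embRl ι c a).map_add v w

variable (δ : Q × Γ → Q × Γ × Dir → ℂ)

lemma eqns_Uop : Eqns δ (Uop δ) := by
  refine ⟨fun a b => ?_, fun p a c => ?_, fun p a c => ?_, fun v hv c d => ?_, fun v hv c d => ?_,
    fun v hv c d => ?_, fun v hv c d => ?_, fun v hv c d => ?_, fun v hv c d => ?_,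
    fun v hv c d => ?_, fun v hv c d => ?_⟩
  · rw [Uop_bvec, Umap_nH]
  · rw [Uop_bvec, Umap_rH_pl]
  · rw [Uop_bvec, Umap_lH_pl]
  · rw [Uop_embR_up, PL_of_mem δ hv]; simp
  · rw [Uop_embL_up, PR_of_mem δ hv]; simp
  · rw [Uop_embR_up, PL_of_orth δ hv]; simp
  · rw [Uop_embL_up, PR_of_orth δ hv]; simp
  · rw [Uop_embR_dn, PL_of_mem δ hv]; simp
  · rw [Uop_embL_dn, PR_of_mem δ hv]; simp
  · rw [Uop_embR_dn, PL_of_orth δ hv]; simp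
  · rw [Uop_embL_dn, PR_of_orth δ hv]; simp

lemma eqns_unique (U : EuclideanSpace ℂ (BrickD Q Γ) →ₗ[ℂ] EuclideanSpace ℂ (BrickD Q Γ))
    (h : Eqns δ U) : U = Uop δ := by
  obtain ⟨h0, h1r, h1l, h2r, h2l, h2r', h2l', h3r, h3l, h3r', h3l'⟩ := h
  apply Module.Basis.ext (EuclideanSpace.basisFun (BrickD Q Γ) ℂ).toBasis
  intro x
  have hb : (EuclideanSpace.basisFun (BrickD Q Γ) ℂ).toBasis x = bvec x := by
    simp [bvec, EuclideanSpace.basisFun_apply]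
  rw [hb, Uop_bvec]
  have hdecL : ∀ v : EuclideanSpace ℂ Q, PL δ v + (v - PL δ v) = v := fun v => by abel
  have hdecR : ∀ v : EuclideanSpace ℂ Q, PR δ v + (v - PR δ v) = v := fun v => by abel
  rcases x with ⟨p | q | q, a, c⟩ | ⟨⟨c, p | q | q, a⟩ | ⟨a, c⟩⟩
  · exact h1l p a c
  · -- lH (up q) a c
    rw [show (Sum.inl (Sum.inr (Sum.inl q), a, c) : BrickD Q Γ) = lH (up q) a c from rfl,
      ← embL_single]
    conv_lhs => rw [← hdecR (eQ q), embL_add, map_add]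
    rw [h2l _ (PR_mem δ (eQ q)) a c, h2l' _ (sub_PR_mem δ (eQ q)) a c, Umap_lH_up]
  · -- lH (dn q) a c
    rw [show (Sum.inl (Sum.inr (Sum.inr q), a, c) : BrickD Q Γ) = lH (dn q) a c from rfl,
      ← embL_single]
    conv_lhs => rw [← hdecR (eQ q), embL_add, map_add]
    rw [h3l _ (PR_mem δ (eQ q)) a c, h3l' _ (sub_PR_mem δ (eQ q)) a c, Umap_lH_dn]
  · -- rH pl
    exact h1r p a c
  · -- rH c (up q) a
    rw [show (Sum.inr (Sum.inl (c, Sum.inr (Sum.inl q), a)) : BrickD Q Γ) = rH c (up q) a from rfl,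
      ← embR_single]
    conv_lhs => rw [← hdecL (eQ q), embR_add, map_add]
    rw [h2r _ (PL_mem δ (eQ q)) a c, h2r' _ (sub_PL_mem δ (eQ q)) a c, Umap_rH_up]
  · -- rH c (dn q) a
    rw [show (Sum.inr (Sum.inl (c, Sum.inr (Sum.inr q), a)) : BrickD Q Γ) = rH c (dn q) a from rfl,
      ← embR_single]
    conv_lhs => rw [← hdecL (eQ q), embR_add, map_add]
    rw [h3r _ (PL_mem δ (eQ q)) a c, h3r' _ (sub_PL_mem δ (eQ q)) a c, Umap_rH_dn]
  · exact h0 a c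

end Aux5
section Aux6
set_option linter.unusedSectionVars false
variable {Q Γ : Type*} [Fintype Q] [Fintype Γ] [DecidableEq Q] [DecidableEq Γ]

local notation "⟪" x ", " y "⟫" => @inner ℂ _ _ x y

lemma sum_dir (f : Dir → ℂ) : ∑ d, f d = f dMinus + f dPlus := by
  have h : (Finset.univ : Finset Dir) = {dMinus, dPlus} := by decide
  rw [h, Finset.sum_pair (by decide)]

variable (δ : Q × Γ → Q × Γ × Dir → ℂ)

lemma inner_expand (p₁ p₂ : Q) (a₁ a₂ : Γ) :
    ⟪toEuc (δ (p₁, a₁)), toEuc (δ (p₂, a₂))⟫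
      = ∑ b, (⟪Lvec δ p₁ a₁ b, Lvec δ p₂ a₂ b⟫ + ⟪Rvec δ p₁ a₁ b, Rvec δ p₂ a₂ b⟫) := by
  rw [PiLp.inner_apply]
  have hg : ∀ g : Q × Γ × Dir → ℂ, ∑ x, g x = ∑ q, ∑ b, (g (q,b,dMinus) + g (q,b,dPlus)) := by
    intro g
    rw [Fintype.sum_prod_type]
    refine Finset.sum_congr rfl fun q _ => ?_
    rw [Fintype.sum_prod_type]
    exact Finset.sum_congr rfl fun b _ => sum_dir _
  rw [hg, Finset.sum_comm]
  refine Finset.sum_congr rfl fun b _ => ?_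
  rw [Lvec, Rvec, PiLp.inner_apply, PiLp.inner_apply, ← Finset.sum_add_distrib]
  simp [toEuc, Lvec, Rvec, RCLike.inner_apply]

end Aux6
section Aux7
set_option linter.unusedSectionVars false
set_option maxHeartbeats 8000000
variable {Q Γ : Type*} [Fintype Q] [Fintype Γ] [DecidableEq Q] [DecidableEq Γ]

local notation "⟪" x ", " y "⟫" => @inner ℂ _ _ x y

lemma brick_cases (P : BrickD Q Γ → Prop)
    (h1 : ∀ p a c, P (lH (pl p) a c)) (h2 : ∀ q a c, P (lH (up q) a c))
    (h3 : ∀ q a c, P (lH (dn q) a c)) (h4 : ∀ c p a, P (rH c (pl p) a))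
    (h5 : ∀ c q a, P (rH c (up q) a)) (h6 : ∀ c q a, P (rH c (dn q) a))
    (h7 : ∀ a c, P (nH a c)) : ∀ x, P x := by
  rintro (⟨p | q | q, a, c⟩ | ⟨⟨c, p | q | q, a⟩ | ⟨a, c⟩⟩)
  exacts [h1 p a c, h2 q a c, h3 q a c, h4 c p a, h5 c q a, h6 c q a, h7 a c]

variable (δ : Q × Γ → Q × Γ × Dir → ℂ)

lemma key_inner
    (hunit : ∀ p a, ‖toEuc (δ (p, a))‖ = 1)
    (horth : ∀ (p₁ : Q) (a₁ : Γ) (p₂ : Q) (a₂ : Γ), (p₁, a₁) ≠ (p₂, a₂) →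
      ⟪toEuc (δ (p₁, a₁)), toEuc (δ (p₂, a₂))⟫ = 0)
    (hsep : ∀ (p₁ : Q) (a₁ b₁ : Γ) (p₂ : Q) (a₂ b₂ : Γ),
      ⟪Lvec δ p₁ a₁ b₁, Rvec δ p₂ a₂ b₂⟫ = 0) :
    ∀ i j : BrickD Q Γ, ⟪Umap δ i, Umap δ j⟫ = ⟪bvec i, bvec j⟫ := by
  have hLR : (Lspan δ).IsOrtho (Rspan δ) := Submodule.isOrtho_span.mpr <| by
    rintro u ⟨p, a, b, rfl⟩ v ⟨p', a', b', rfl⟩; exact hsep p a b p' a' b'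
  have fPLR : ∀ v w : EuclideanSpace ℂ Q, ⟪PL δ v, PR δ w⟫ = 0 := fun v w =>
    hLR.inner_eq (PL_mem δ v) (PR_mem δ w)
  have fPRL : ∀ v w : EuclideanSpace ℂ Q, ⟪PR δ v, PL δ w⟫ = 0 := fun v w =>
    hLR.symm.inner_eq (PR_mem δ v) (PL_mem δ w)
  have hLmem : ∀ p a b, Lvec δ p a b ∈ Lspan δ := fun p a b => Submodule.subset_span ⟨p, a, b, rfl⟩
  have hRmem : ∀ p a b, Rvec δ p a b ∈ Rspan δ := fun p a b => Submodule.subset_span ⟨p, a, b, rfl⟩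
  have fL1 : ∀ p a b (w : EuclideanSpace ℂ Q), ⟪Lvec δ p a b, w - PL δ w⟫ = 0 := fun p a b w =>
    Submodule.inner_right_of_mem_orthogonal (hLmem p a b) (sub_PL_mem δ w)
  have fL2 : ∀ p a b (w : EuclideanSpace ℂ Q), ⟪w - PL δ w, Lvec δ p a b⟫ = 0 := fun p a b w =>
    Submodule.inner_left_of_mem_orthogonal (hLmem p a b) (sub_PL_mem δ w)
  have fR1 : ∀ p a b (w : EuclideanSpace ℂ Q), ⟪Rvec δ p a b, w - PR δ w⟫ = 0 := fun p a b w =>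
    Submodule.inner_right_of_mem_orthogonal (hRmem p a b) (sub_PR_mem δ w)
  have fR2 : ∀ p a b (w : EuclideanSpace ℂ Q), ⟪w - PR δ w, Rvec δ p a b⟫ = 0 := fun p a b w =>
    Submodule.inner_left_of_mem_orthogonal (hRmem p a b) (sub_PR_mem δ w)
  have fParL : ∀ v w : EuclideanSpace ℂ Q,
      ⟪PL δ v, PL δ w⟫ + ⟪v - PL δ v, w - PL δ w⟫ = ⟪v, w⟫ := by
    intro v w
    have hv : PL δ v + (v - PL δ v) = v := by abel
    have hw : PL δ w + (w - PL δ w) = w := by abel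
    have h1 : ⟪PL δ v + (v - PL δ v), PL δ w + (w - PL δ w)⟫ = ⟪v, w⟫ := by rw [hv, hw]
    rw [inner_add_left, inner_add_right, inner_add_right,
      Submodule.inner_right_of_mem_orthogonal (PL_mem δ v) (sub_PL_mem δ w),
      Submodule.inner_left_of_mem_orthogonal (PL_mem δ w) (sub_PL_mem δ v)] at h1
    linear_combination h1
  have fParR : ∀ v w : EuclideanSpace ℂ Q,
      ⟪PR δ v, PR δ w⟫ + ⟪v - PR δ v, w - PR δ w⟫ = ⟪v, w⟫ := by
    intro v w
    have hv : PR δ v + (v - PR δ v) = v := by abel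
    have hw : PR δ w + (w - PR δ w) = w := by abel
    have h1 : ⟪PR δ v + (v - PR δ v), PR δ w + (w - PR δ w)⟫ = ⟪v, w⟫ := by rw [hv, hw]
    rw [inner_add_left, inner_add_right, inner_add_right,
      Submodule.inner_right_of_mem_orthogonal (PR_mem δ v) (sub_PR_mem δ w),
      Submodule.inner_left_of_mem_orthogonal (PR_mem δ w) (sub_PR_mem δ v)] at h1
    linear_combination h1
  have fdelta : ∀ p1 a1 p2 a2, ⟪toEuc (δ (p1, a1)), toEuc (δ (p2, a2))⟫
      = if p1 = p2 ∧ a1 = a2 then 1 else 0 := by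
    intro p1 a1 p2 a2
    by_cases h : p1 = p2 ∧ a1 = a2
    · obtain ⟨rfl, rfl⟩ := h
      rw [if_pos ⟨rfl, rfl⟩, inner_self_eq_norm_sq_to_K, hunit]; norm_num
    · rw [if_neg h]; exact horth _ _ _ _ (by simpa [Prod.ext_iff] using h)
  have fsum : ∀ p1 a1 p2 a2,
      (∑ b, (⟪Lvec δ p1 a1 b, Lvec δ p2 a2 b⟫ + ⟪Rvec δ p1 a1 b, Rvec δ p2 a2 b⟫))
        = if p1 = p2 ∧ a1 = a2 then 1 else 0 := fun p1 a1 p2 a2 => by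
    rw [← inner_expand, fdelta]
  have feQ : ∀ q q' : Q, ⟪eQ q, eQ q'⟫ = if q = q' then (1 : ℂ) else 0 := by
    intro q q'
    rw [eQ, eQ, EuclideanSpace.inner_single_left, EuclideanSpace.single_apply]
    simp [eq_comm]
  have fsum2 : ∀ p1 a1 p2 a2,
      (∑ b, (⟪Rvec δ p1 a1 b, Rvec δ p2 a2 b⟫ + ⟪Lvec δ p1 a1 b, Lvec δ p2 a2 b⟫))
        = if p1 = p2 ∧ a1 = a2 then 1 else 0 := fun p1 a1 p2 a2 => by
    rw [← fsum p1 a1 p2 a2]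
    exact Finset.sum_congr rfl fun b _ => add_comm _ _
  have fsumLR : ∀ p1 a1 p2 a2,
      ((∑ b, ⟪Lvec δ p1 a1 b, Lvec δ p2 a2 b⟫) + (∑ b, ⟪Rvec δ p1 a1 b, Rvec δ p2 a2 b⟫))
        = if p1 = p2 ∧ a1 = a2 then 1 else 0 := fun p1 a1 p2 a2 => by
    rw [← Finset.sum_add_distrib]; exact fsum p1 a1 p2 a2
  have fsumRL : ∀ p1 a1 p2 a2,
      ((∑ b, ⟪Rvec δ p1 a1 b, Rvec δ p2 a2 b⟫) + (∑ b, ⟪Lvec δ p1 a1 b, Lvec δ p2 a2 b⟫))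
        = if p1 = p2 ∧ a1 = a2 then 1 else 0 := fun p1 a1 p2 a2 => by
    rw [add_comm]; exact fsumLR p1 a1 p2 a2
  have sum_ite_const : ∀ (P : Prop) [Decidable P] (f : Γ → ℂ),
      (∑ x, (if P then f x else 0)) = if P then ∑ x, f x else 0 := by
    intro P _ f; split_ifs <;> simp
  refine brick_cases _ ?_ ?_ ?_ ?_ ?_ ?_ ?_
  · intro x1 x2 x3
    refine brick_cases _ ?_ ?_ ?_ ?_ ?_ ?_ ?_ <;> intro y1 y2 <;> try intro y3
    all_goals (
      simp only [Umap_lH_pl, Umap_lH_up, Umap_lH_dn, Umap_rH_pl, Umap_rH_up, Umap_rH_dn, Umap_nH];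
      try simp only [inner_sum, sum_inner, inner_add_left, inner_add_right,
        iLL_pp, iLL_uu, iLL_dd, iLL_pu, iLL_pd, iLL_up, iLL_ud, iLL_dp, iLL_du,
        iRR_pp, iRR_uu, iRR_dd, iRR_pu, iRR_pd, iRR_up, iRR_ud, iRR_dp, iRR_du,
        inner_embL_embR, inner_embR_embL, inner_nH_embL, inner_embL_nH, inner_nH_embR,
        inner_embR_nH, inner_bvec_bvec, fL1, fL2, fR1, fR2, fPLR, fPRL,
        ite_self, add_zero, zero_add, Finset.sum_const_zero, ite_add_ite,
        fParL, fParR, feQ, fsum, fsum2, fsumLR, fsumRL, ite_and, sum_ite_const,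
        Finset.sum_add_distrib,
        Finset.sum_ite_eq, Finset.sum_ite_eq', Finset.mem_univ, if_true];
      try simp only [lH, rH, nH, pl, up, dn, Sum.inl.injEq, Sum.inr.injEq, Prod.mk.injEq,
        ite_and, ite_self, add_zero, zero_add])
    all_goals try rfl
    all_goals try (split_ifs <;> simp_all only [fParL, fParR, feQ, fsum, fsum2, ite_add_ite,
      add_zero, zero_add] <;> first | rfl | tauto | (split_ifs <;> tauto))
  · intro x1 x2 x3
    refine brick_cases _ ?_ ?_ ?_ ?_ ?_ ?_ ?_ <;> intro y1 y2 <;> try intro y3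
    all_goals (
      simp only [Umap_lH_pl, Umap_lH_up, Umap_lH_dn, Umap_rH_pl, Umap_rH_up, Umap_rH_dn, Umap_nH];
      try simp only [inner_sum, sum_inner, inner_add_left, inner_add_right,
        iLL_pp, iLL_uu, iLL_dd, iLL_pu, iLL_pd, iLL_up, iLL_ud, iLL_dp, iLL_du,
        iRR_pp, iRR_uu, iRR_dd, iRR_pu, iRR_pd, iRR_up, iRR_ud, iRR_dp, iRR_du,
        inner_embL_embR, inner_embR_embL, inner_nH_embL, inner_embL_nH, inner_nH_embR,
        inner_embR_nH, inner_bvec_bvec, fL1, fL2, fR1, fR2, fPLR, fPRL,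
        ite_self, add_zero, zero_add, Finset.sum_const_zero, ite_add_ite,
        fParL, fParR, feQ, fsum, fsum2, fsumLR, fsumRL, ite_and, sum_ite_const,
        Finset.sum_add_distrib,
        Finset.sum_ite_eq, Finset.sum_ite_eq', Finset.mem_univ, if_true];
      try simp only [lH, rH, nH, pl, up, dn, Sum.inl.injEq, Sum.inr.injEq, Prod.mk.injEq,
        ite_and, ite_self, add_zero, zero_add])
    all_goals try rfl
    all_goals try (split_ifs <;> simp_all only [fParL, fParR, feQ, fsum, fsum2, ite_add_ite,
      add_zero, zero_add] <;> first | rfl | tauto | (split_ifs <;> tauto))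
  · intro x1 x2 x3
    refine brick_cases _ ?_ ?_ ?_ ?_ ?_ ?_ ?_ <;> intro y1 y2 <;> try intro y3
    all_goals (
      simp only [Umap_lH_pl, Umap_lH_up, Umap_lH_dn, Umap_rH_pl, Umap_rH_up, Umap_rH_dn, Umap_nH];
      try simp only [inner_sum, sum_inner, inner_add_left, inner_add_right,
        iLL_pp, iLL_uu, iLL_dd, iLL_pu, iLL_pd, iLL_up, iLL_ud, iLL_dp, iLL_du,
        iRR_pp, iRR_uu, iRR_dd, iRR_pu, iRR_pd, iRR_up, iRR_ud, iRR_dp, iRR_du,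
        inner_embL_embR, inner_embR_embL, inner_nH_embL, inner_embL_nH, inner_nH_embR,
        inner_embR_nH, inner_bvec_bvec, fL1, fL2, fR1, fR2, fPLR, fPRL,
        ite_self, add_zero, zero_add, Finset.sum_const_zero, ite_add_ite,
        fParL, fParR, feQ, fsum, fsum2, fsumLR, fsumRL, ite_and, sum_ite_const,
        Finset.sum_add_distrib,
        Finset.sum_ite_eq, Finset.sum_ite_eq', Finset.mem_univ, if_true];
      try simp only [lH, rH, nH, pl, up, dn, Sum.inl.injEq, Sum.inr.injEq, Prod.mk.injEq,
        ite_and, ite_self, add_zero, zero_add])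
    all_goals try rfl
    all_goals try (split_ifs <;> simp_all only [fParL, fParR, feQ, fsum, fsum2, ite_add_ite,
      add_zero, zero_add] <;> first | rfl | tauto | (split_ifs <;> tauto))
  · intro x1 x2 x3
    refine brick_cases _ ?_ ?_ ?_ ?_ ?_ ?_ ?_ <;> intro y1 y2 <;> try intro y3
    all_goals (
      simp only [Umap_lH_pl, Umap_lH_up, Umap_lH_dn, Umap_rH_pl, Umap_rH_up, Umap_rH_dn, Umap_nH];
      try simp only [inner_sum, sum_inner, inner_add_left, inner_add_right,
        iLL_pp, iLL_uu, iLL_dd, iLL_pu, iLL_pd, iLL_up, iLL_ud, iLL_dp, iLL_du,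
        iRR_pp, iRR_uu, iRR_dd, iRR_pu, iRR_pd, iRR_up, iRR_ud, iRR_dp, iRR_du,
        inner_embL_embR, inner_embR_embL, inner_nH_embL, inner_embL_nH, inner_nH_embR,
        inner_embR_nH, inner_bvec_bvec, fL1, fL2, fR1, fR2, fPLR, fPRL,
        ite_self, add_zero, zero_add, Finset.sum_const_zero, ite_add_ite,
        fParL, fParR, feQ, fsum, fsum2, fsumLR, fsumRL, ite_and, sum_ite_const,
        Finset.sum_add_distrib,
        Finset.sum_ite_eq, Finset.sum_ite_eq', Finset.mem_univ, if_true];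
      try simp only [lH, rH, nH, pl, up, dn, Sum.inl.injEq, Sum.inr.injEq, Prod.mk.injEq,
        ite_and, ite_self, add_zero, zero_add])
    all_goals try rfl
    all_goals try (split_ifs <;> simp_all only [fParL, fParR, feQ, fsum, fsum2, ite_add_ite,
      add_zero, zero_add] <;> first | rfl | tauto | (split_ifs <;> tauto))
  · intro x1 x2 x3
    refine brick_cases _ ?_ ?_ ?_ ?_ ?_ ?_ ?_ <;> intro y1 y2 <;> try intro y3
    all_goals (
      simp only [Umap_lH_pl, Umap_lH_up, Umap_lH_dn, Umap_rH_pl, Umap_rH_up, Umap_rH_dn, Umap_nH];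
      try simp only [inner_sum, sum_inner, inner_add_left, inner_add_right,
        iLL_pp, iLL_uu, iLL_dd, iLL_pu, iLL_pd, iLL_up, iLL_ud, iLL_dp, iLL_du,
        iRR_pp, iRR_uu, iRR_dd, iRR_pu, iRR_pd, iRR_up, iRR_ud, iRR_dp, iRR_du,
        inner_embL_embR, inner_embR_embL, inner_nH_embL, inner_embL_nH, inner_nH_embR,
        inner_embR_nH, inner_bvec_bvec, fL1, fL2, fR1, fR2, fPLR, fPRL,
        ite_self, add_zero, zero_add, Finset.sum_const_zero, ite_add_ite,
        fParL, fParR, feQ, fsum, fsum2, fsumLR, fsumRL, ite_and, sum_ite_const,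
        Finset.sum_add_distrib,
        Finset.sum_ite_eq, Finset.sum_ite_eq', Finset.mem_univ, if_true];
      try simp only [lH, rH, nH, pl, up, dn, Sum.inl.injEq, Sum.inr.injEq, Prod.mk.injEq,
        ite_and, ite_self, add_zero, zero_add])
    all_goals try rfl
    all_goals try (split_ifs <;> simp_all only [fParL, fParR, feQ, fsum, fsum2, ite_add_ite,
      add_zero, zero_add] <;> first | rfl | tauto | (split_ifs <;> tauto))
  · intro x1 x2 x3
    refine brick_cases _ ?_ ?_ ?_ ?_ ?_ ?_ ?_ <;> intro y1 y2 <;> try intro y3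
    all_goals (
      simp only [Umap_lH_pl, Umap_lH_up, Umap_lH_dn, Umap_rH_pl, Umap_rH_up, Umap_rH_dn, Umap_nH];
      try simp only [inner_sum, sum_inner, inner_add_left, inner_add_right,
        iLL_pp, iLL_uu, iLL_dd, iLL_pu, iLL_pd, iLL_up, iLL_ud, iLL_dp, iLL_du,
        iRR_pp, iRR_uu, iRR_dd, iRR_pu, iRR_pd, iRR_up, iRR_ud, iRR_dp, iRR_du,
        inner_embL_embR, inner_embR_embL, inner_nH_embL, inner_embL_nH, inner_nH_embR,
        inner_embR_nH, inner_bvec_bvec, fL1, fL2, fR1, fR2, fPLR, fPRL,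
        ite_self, add_zero, zero_add, Finset.sum_const_zero, ite_add_ite,
        fParL, fParR, feQ, fsum, fsum2, fsumLR, fsumRL, ite_and, sum_ite_const,
        Finset.sum_add_distrib,
        Finset.sum_ite_eq, Finset.sum_ite_eq', Finset.mem_univ, if_true];
      try simp only [lH, rH, nH, pl, up, dn, Sum.inl.injEq, Sum.inr.injEq, Prod.mk.injEq,
        ite_and, ite_self, add_zero, zero_add])
    all_goals try rfl
    all_goals try (split_ifs <;> simp_all only [fParL, fParR, feQ, fsum, fsum2, ite_add_ite,
      add_zero, zero_add] <;> first | rfl | tauto | (split_ifs <;> tauto))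
  · intro x1 x2
    refine brick_cases _ ?_ ?_ ?_ ?_ ?_ ?_ ?_ <;> intro y1 y2 <;> try intro y3
    all_goals (
      simp only [Umap_lH_pl, Umap_lH_up, Umap_lH_dn, Umap_rH_pl, Umap_rH_up, Umap_rH_dn, Umap_nH];
      try simp only [inner_sum, sum_inner, inner_add_left, inner_add_right,
        iLL_pp, iLL_uu, iLL_dd, iLL_pu, iLL_pd, iLL_up, iLL_ud, iLL_dp, iLL_du,
        iRR_pp, iRR_uu, iRR_dd, iRR_pu, iRR_pd, iRR_up, iRR_ud, iRR_dp, iRR_du,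
        inner_embL_embR, inner_embR_embL, inner_nH_embL, inner_embL_nH, inner_nH_embR,
        inner_embR_nH, inner_bvec_bvec, fL1, fL2, fR1, fR2, fPLR, fPRL,
        ite_self, add_zero, zero_add, Finset.sum_const_zero, ite_add_ite,
        fParL, fParR, feQ, fsum, fsum2, fsumLR, fsumRL, ite_and, sum_ite_const,
        Finset.sum_add_distrib,
        Finset.sum_ite_eq, Finset.sum_ite_eq', Finset.mem_univ, if_true];
      try simp only [lH, rH, nH, pl, up, dn, Sum.inl.injEq, Sum.inr.injEq, Prod.mk.injEq,
        ite_and, ite_self, add_zero, zero_add])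
    all_goals try rfl
    all_goals try (split_ifs <;> simp_all only [fParL, fParR, feQ, fsum, fsum2, ite_add_ite,
      add_zero, zero_add] <;> first | rfl | tauto | (split_ifs <;> tauto))

end Aux7
section Final
set_option linter.unusedSectionVars false
set_option maxHeartbeats 1000000
variable {Q Γ : Type*} [Fintype Q] [Fintype Γ] [DecidableEq Q] [DecidableEq Γ]

local notation "⟪" x ", " y "⟫" => @inner ℂ _ _ x y

lemma Uop_inner_pres (δ : Q × Γ → Q × Γ × Dir → ℂ)
    (hkey : ∀ i j : BrickD Q Γ, ⟪Umap δ i, Umap δ j⟫ = ⟪bvec i, bvec j⟫) :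
    ∀ x y : EuclideanSpace ℂ (BrickD Q Γ), ⟪Uop δ x, Uop δ y⟫ = ⟪x, y⟫ := by
  intro x y
  conv_lhs => rw [← euc_sum_single x, ← euc_sum_single y]
  conv_rhs => rw [← euc_sum_single x, ← euc_sum_single y]
  rw [map_sum, map_sum]
  have hb : ∀ i j : BrickD Q Γ, ⟪Uop δ (eQ i), Uop δ (eQ j)⟫ = ⟪eQ i, eQ j⟫ := fun i j => by
    rw [show (eQ i : EuclideanSpace ℂ (BrickD Q Γ)) = bvec i from rfl,
      show (eQ j : EuclideanSpace ℂ (BrickD Q Γ)) = bvec j from rfl, Uop_bvec, Uop_bvec, hkey]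
  simp only [map_smul, sum_inner, inner_sum, inner_smul_left, inner_smul_right, hb]
end Final

/-- There is a unique linear operator `U` on `BRICK` satisfying equations (u0)--(u3'),
and this operator is unitary. -/
theorem stmt_12 {Q Γ : Type*} [Fintype Q] [Fintype Γ] [DecidableEq Q] [DecidableEq Γ]
    [Nonempty Q] [Nonempty Γ] (δ : Q × Γ → Q × Γ × Dir → ℂ)
    (hunit : ∀ p a, ‖toEuc (δ (p, a))‖ = 1)
    (horth : ∀ (p₁ : Q) (a₁ : Γ) (p₂ : Q) (a₂ : Γ), (p₁, a₁) ≠ (p₂, a₂) →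
      (inner ℂ (toEuc (δ (p₁, a₁))) (toEuc (δ (p₂, a₂))) : ℂ) = 0)
    (hsep : ∀ (p₁ : Q) (a₁ b₁ : Γ) (p₂ : Q) (a₂ b₂ : Γ),
      (inner ℂ (Lvec δ p₁ a₁ b₁) (Rvec δ p₂ a₂ b₂) : ℂ) = 0) :
    (∃! U : EuclideanSpace ℂ (BrickD Q Γ) →ₗ[ℂ] EuclideanSpace ℂ (BrickD Q Γ),
      Eqns δ U) ∧
    (∀ U : EuclideanSpace ℂ (BrickD Q Γ) →ₗ[ℂ] EuclideanSpace ℂ (BrickD Q Γ),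
      Eqns δ U → IsUnitaryOp U) := by
  have hkey := key_inner δ hunit horth hsep
  have hpres := Uop_inner_pres δ hkey
  constructor
  · exact ⟨Uop δ, eqns_Uop δ, fun U h => eqns_unique δ U h⟩
  · intro U hEq
    have hUeq : U = Uop δ := eqns_unique δ U hEq
    subst hUeq
    refine ⟨?_, hpres⟩
    have hinj : Function.Injective (Uop δ) := by
      intro x y hxy
      have h0 : (inner ℂ (Uop δ (x - y)) (Uop δ (x - y)) : ℂ) = inner ℂ (x - y) (x - y) :=
        hpres _ _
      rw [map_sub, hxy, sub_self, inner_zero_left] at h0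
      exact sub_eq_zero.mp (inner_self_eq_zero.mp h0.symm)
    exact (LinearMap.injective_iff_surjective).mp hinj
end

section
/- Let N ≥ 1 and consider the looped-tape machine M' = (Q', Γ', δ')_N with cells indexed by ZMod N. Let (p, i, X) ∈ Q × ZMod N × (ZMod N → Γ) be a configuration with δ(p, X(i)) = none and p ∈ Q₊. Then: (i) for every k with 1 ≤ k ≤ N, the configuration of M' after k steps starting from (p, i, X) is (p', i + k, X_k), where X_k(j) = (X(j))' if j ∈ {i, i+1, …, i+k-1} (indices mod N) and X_k(j) = X(j) otherwise; in particular the successor is defined at each of these first N steps; (ii) the configuration after N steps is (p', i, X_N) with X_N(j) = (X(j))' for all j, and this configuration has no successor. Thus, starting from a halting configuration of M, the extended machine M' runs exactly N further steps before halting. -/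
variable {Q Γ : Type*}

open Classical in
/-- The extended transition function `δ'` on states `Q' = Q ⊎ Q` (primed copies are
`Sum.inr`) and alphabet `Γ' = Γ ⊎ Γ`: it agrees with `δ` where `δ` is defined; on a
halting pair `(p, a)` (unprimed) and on primed states scanning unprimed symbols it
primes the scanned symbol and moves in the direction determined by `Q₊`/`Q₋ = Q₊ᶜ`;
on primed symbols it is undefined. -/
noncomputable def δext (δ : Q × Γ → Option (Q × Γ × Dir)) (Qp : Set Q) :
    (Q ⊕ Q) × (Γ ⊕ Γ) → Option ((Q ⊕ Q) × (Γ ⊕ Γ) × Dir) :=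
  fun x =>
    match x with
    | (Sum.inl p, Sum.inl a) =>
        match δ (p, a) with
        | some (q, b, d) => some (Sum.inl q, Sum.inl b, d)
        | none => some (Sum.inr p, Sum.inr a, if p ∈ Qp then dPlus else dMinus)
    | (Sum.inr p, Sum.inl a) =>
        some (Sum.inr p, Sum.inr a, if p ∈ Qp then dPlus else dMinus)
    | (_, Sum.inr _) => none

/-- The configuration reached after `k` steps (if all `k` successors are defined). -/
def iterStep {C : Type*} (f : C → Option C) : ℕ → C → Option C
  | 0, c => some c
  | k + 1, c => (f c).bind (iterStep f k)


private lemma iterStep_succ' {C : Type*} (f : C → Option C) (k : ℕ) (c : C) :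
    iterStep f (k+1) c = (iterStep f k c).bind f := by
  induction k generalizing c with
  | zero => cases h : f c <;> simp [iterStep, h]
  | succ k ih =>
    show (f c).bind (iterStep f (k+1)) = ((f c).bind (iterStep f k)).bind f
    cases h : f c with
    | none => rfl
    | some c' => simp [ih]

open Classical in
/-- Let `N ≥ 1` and consider the looped-tape machine `M' = (Q', Γ', δ')_N`. If
`(p, i, X)` is a configuration of `M` with `δ(p, X(i)) = none` and `p ∈ Q₊`, then:
(i) for `1 ≤ k ≤ N`, after `k` steps `M'` is in configuration `(p', i + k, X_k)`
where `X_k` primes exactly the cells `i, i+1, …, i+k-1` (mod `N`);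
(ii) after `N` steps `M'` is in configuration `(p', i, X_N)` with every cell primed,
and this configuration has no successor. -/
theorem stmt_15 {Q Γ : Type*} [Fintype Q] [Fintype Γ] [Nonempty Q] (blank : Γ)
    (δ : Q × Γ → Option (Q × Γ × Dir))
    (Qm Qp : Set Q) (hdisj : Disjoint Qm Qp)
    (hm : Qneg δ ⊆ Qm) (hp : Qpos δ ⊆ Qp) (hun : Qm ∪ Qp = Set.univ)
    (N : ℕ) (hN : 1 ≤ N) (p : Q) (i : ZMod N) (X : ZMod N → Γ)
    (hhalt : δ (p, X i) = none) (hpos : p ∈ Qp) :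
    (∀ k : ℕ, 1 ≤ k → k ≤ N →
      iterStep (succMod N (δext δ Qp)) k (Sum.inl p, i, fun j => Sum.inl (X j)) =
        some (Sum.inr p, i + (k : ZMod N), fun j =>
          if ∃ m : ℕ, m < k ∧ j = i + (m : ZMod N) then Sum.inr (X j) else Sum.inl (X j))) ∧
    iterStep (succMod N (δext δ Qp)) N (Sum.inl p, i, fun j => Sum.inl (X j)) =
      some (Sum.inr p, i, fun j => Sum.inr (X j)) ∧
    succMod N (δext δ Qp) (Sum.inr p, i, fun j => Sum.inr (X j)) = none := by
  classical
  set f := succMod N (δext δ Qp) with hf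
  -- tape after k steps
  set Y : ℕ → ZMod N → Γ ⊕ Γ := fun k j =>
    if ∃ m : ℕ, m < k ∧ j = i + (m : ZMod N) then Sum.inr (X j) else Sum.inl (X j) with hY
  have hne : ∀ m k : ℕ, m < k → k < N → i + (m : ZMod N) ≠ i + (k : ZMod N) := by
    intro m k hmk hkN h
    have : (m : ZMod N) = (k : ZMod N) := by
      have := add_left_cancel h; exact this
    have hm' : m = k := by
      have := congrArg ZMod.val this
      rwa [ZMod.val_cast_of_lt (lt_trans hmk hkN), ZMod.val_cast_of_lt hkN] at this
    omega
  -- one step from the primed configuration at position i + k, for k < N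
  have hstep : ∀ k : ℕ, k < N →
      f (Sum.inr p, i + (k : ZMod N), Y k) =
        some (Sum.inr p, i + ((k+1 : ℕ) : ZMod N), Y (k+1)) := by
    intro k hk
    have hread : Y k (i + (k : ZMod N)) = Sum.inl (X (i + (k : ZMod N))) := by
      rw [hY]
      simp only [ite_eq_right_iff]
      rintro ⟨m, hm, hjm⟩
      exact absurd hjm.symm (hne m k hm hk)
    show (δext δ Qp (Sum.inr p, Y k (i + (k : ZMod N)))).map _ = _
    rw [hread]
    simp only [δext, if_pos hpos, Option.map_some]
    congr 1
    refine Prod.ext rfl (Prod.ext ?_ ?_)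
    · show i + (k : ZMod N) + ((dPlus : ℤ) : ZMod N) = i + ((k+1 : ℕ) : ZMod N)
      have : ((dPlus : ℤ) : ZMod N) = 1 := by norm_num [dPlus]
      rw [this]
      push_cast
      ring
    · show Function.update (Y k) (i + (k : ZMod N)) (Sum.inr (X (i + (k : ZMod N)))) = Y (k+1)
      funext j
      by_cases hj : j = i + (k : ZMod N)
      · subst hj
        rw [Function.update_self, hY]
        simp only
        rw [if_pos ⟨k, by omega, rfl⟩]
      · rw [Function.update_of_ne hj, hY]
        simp only
        by_cases hcond : ∃ m : ℕ, m < k ∧ j = i + (m : ZMod N)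
        · obtain ⟨m, hm, hjm⟩ := hcond
          rw [if_pos ⟨m, hm, hjm⟩, if_pos ⟨m, by omega, hjm⟩]
        · rw [if_neg hcond, if_neg]
          rintro ⟨m, hm, hjm⟩
          rcases Nat.lt_or_ge m k with h | h
          · exact hcond ⟨m, h, hjm⟩
          · have : m = k := by omega
            subst this; exact hj hjm
  have hfirst : f (Sum.inl p, i, fun j => Sum.inl (X j)) =
      some (Sum.inr p, i + ((1 : ℕ) : ZMod N), Y 1) := by
    show (δext δ Qp (Sum.inl p, Sum.inl (X i))).map _ = _
    simp only [δext, hhalt, if_pos hpos, Option.map_some]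
    congr 1
    refine Prod.ext rfl (Prod.ext ?_ ?_)
    · show i + ((dPlus : ℤ) : ZMod N) = i + ((1 : ℕ) : ZMod N)
      norm_num [dPlus]
    · show Function.update (fun j => Sum.inl (X j)) i (Sum.inr (X i)) = Y 1
      funext j
      by_cases hj : j = i
      · subst hj
        rw [Function.update_self, hY]
        simp only
        rw [if_pos ⟨0, by omega, by simp⟩]
      · rw [Function.update_of_ne hj, hY]
        simp only
        rw [if_neg]
        rintro ⟨m, hm, hjm⟩
        interval_cases m
        simp at hjm
        exact hj hjm
  have main : ∀ k : ℕ, 1 ≤ k → k ≤ N →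
      iterStep f k (Sum.inl p, i, fun j => Sum.inl (X j)) =
        some (Sum.inr p, i + (k : ZMod N), Y k) := by
    intro k hk1 hkN
    induction k with
    | zero => omega
    | succ k ih =>
      rcases Nat.eq_or_lt_of_le hk1 with h1 | h1
      · rw [← h1]
        show (f _).bind (iterStep f 0) = _
        rw [hfirst]
        rfl
      · have hk : 1 ≤ k := by omega
        rw [iterStep_succ', ih hk (by omega)]
        exact hstep k (by omega)
  have hYN : Y N = fun j => Sum.inr (X j) := by
    funext j
    rw [hY]
    simp only
    rw [if_pos]
    haveI : NeZero N := ⟨by omega⟩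
    refine ⟨(j - i).val, (j - i).val_lt, ?_⟩
    rw [ZMod.natCast_val, ZMod.cast_id]
    ring
  refine ⟨main, ?_, ?_⟩
  · rw [main N hN le_rfl, hYN]
    congr 2
    rw [ZMod.natCast_self, add_zero]
  · show (δext δ Qp (Sum.inr p, Sum.inr (X i))).map _ = none
    rfl
end
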